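/- arXiv:2510.21415 — 8 statements merged into one kernel-verified Lean document; each statement's English description precedes it below -/
import Mathlib

section
/- If X₁ and X₂ are both stabilizing solutions of the DARE (each symmetric, with R + BᵀXᵢB invertible and A − B K_{Xᵢ} Schur stable for i = 1, 2), then X₁ = X₂. -/
open Matrix

/-- A real square matrix is Schur stable if its spectral radius (the maximum
modulus of its complex eigenvalues) is strictly less than 1. -/
def SchurStable {n : ℕ} (M : Matrix (Fin n) (Fin n) ℝ) : Prop :=
  spectralRadius ℂ (M.map Complex.ofReal) < 1

/-- A symmetric matrix `X` with `R + BᵀXB` invertible solving the discrete-time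
algebraic Riccati equation (DARE). -/
def IsDARESolution {n m : ℕ} (A : Matrix (Fin n) (Fin n) ℝ) (B : Matrix (Fin n) (Fin m) ℝ)
    (Q : Matrix (Fin n) (Fin n) ℝ) (S : Matrix (Fin n) (Fin m) ℝ)
    (R : Matrix (Fin m) (Fin m) ℝ) (X : Matrix (Fin n) (Fin n) ℝ) : Prop :=
  X.IsSymm ∧ IsUnit (R + Bᵀ * X * B) ∧
    X = Aᵀ * X * A + Q - (Aᵀ * X * B + S) * (R + Bᵀ * X * B)⁻¹ * (Aᵀ * X * B + S)ᵀ

/-- The gain `K_X = (R + BᵀXB)⁻¹ (BᵀXA + Sᵀ)`. -/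
noncomputable def gain {n m : ℕ} (A : Matrix (Fin n) (Fin n) ℝ) (B : Matrix (Fin n) (Fin m) ℝ)
    (S : Matrix (Fin n) (Fin m) ℝ) (R : Matrix (Fin m) (Fin m) ℝ)
    (X : Matrix (Fin n) (Fin n) ℝ) : Matrix (Fin m) (Fin n) ℝ :=
  (R + Bᵀ * X * B)⁻¹ * (Bᵀ * X * A + Sᵀ)

/-- A stabilizing solution of the DARE: a solution for which `A - B K_X` is Schur stable. -/
def IsStabilizingSolution {n m : ℕ} (A : Matrix (Fin n) (Fin n) ℝ) (B : Matrix (Fin n) (Fin m) ℝ)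
    (Q : Matrix (Fin n) (Fin n) ℝ) (S : Matrix (Fin n) (Fin m) ℝ)
    (R : Matrix (Fin m) (Fin m) ℝ) (X : Matrix (Fin n) (Fin n) ℝ) : Prop :=
  IsDARESolution A B Q S R X ∧ SchurStable (A - B * gain A B S R X)

/- ------------------------------------------------------------------------ -/
/- Auxiliary material                                                        -/
/- ------------------------------------------------------------------------ -/

attribute [local instance] Matrix.linftyOpNormedRing Matrix.linftyOpNormedAlgebra

open Filter in
/-- The spectral radius of a transpose equals that of the original matrix. -/
lemma spectralRadius_transpose_aux {n : ℕ} (M : Matrix (Fin n) (Fin n) ℂ) :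
    spectralRadius ℂ Mᵀ = spectralRadius ℂ M := by
  have hs : spectrum ℂ Mᵀ = spectrum ℂ M := by
    ext z
    have hU : ∀ N : Matrix (Fin n) (Fin n) ℂ, IsUnit Nᵀ ↔ IsUnit N := fun N => by
      rw [Matrix.isUnit_iff_isUnit_det, Matrix.isUnit_iff_isUnit_det, Matrix.det_transpose]
    have h2 : algebraMap ℂ (Matrix (Fin n) (Fin n) ℂ) z - Mᵀ
        = (algebraMap ℂ (Matrix (Fin n) (Fin n) ℂ) z - M)ᵀ := by
      ext i j
      simp only [Matrix.sub_apply, Matrix.transpose_apply, Matrix.algebraMap_matrix_apply]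
      by_cases h : i = j
      · simp [h]
      · simp [h, Ne.symm h]
    rw [spectrum.mem_iff, spectrum.mem_iff, h2]
    exact not_congr (hU _)
  unfold spectralRadius
  rw [hs]

open Filter in
/-- Powers of a matrix with spectral radius `< 1` tend to zero in norm. -/
lemma tendsto_norm_pow_of_spectralRadius_lt_one {n : ℕ} (M : Matrix (Fin n) (Fin n) ℂ)
    (h : spectralRadius ℂ M < 1) :
    Tendsto (fun k : ℕ => ‖M ^ k‖) atTop (nhds 0) := by
  obtain ⟨r, hr1, hr2⟩ := exists_between h
  have hrtop : r ≠ ⊤ := (hr2.trans_le le_top).ne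
  set r' : NNReal := r.toNNReal with hr'def
  have hrr : (r' : ENNReal) = r := ENNReal.coe_toNNReal hrtop
  have hr'lt : (r' : ℝ) < 1 := by
    have h1 : (r' : ENNReal) < 1 := hrr ▸ hr2
    exact_mod_cast h1
  have hev : ∀ᶠ k : ℕ in atTop, (‖M ^ k‖₊ : ENNReal) ^ (1 / (k : ℝ)) < r :=
    (spectrum.pow_nnnorm_pow_one_div_tendsto_nhds_spectralRadius M).eventually_lt_const hr1
  have hbound : ∀ᶠ k : ℕ in atTop, ‖M ^ k‖ ≤ (r' : ℝ) ^ k := by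
    filter_upwards [hev, eventually_ge_atTop 1] with k hk hk1
    have hknz : (k : ℝ) ≠ 0 := Nat.cast_ne_zero.mpr (by omega)
    have h1 : (‖M ^ k‖₊ : ENNReal) ≤ r ^ (k : ℝ) := by
      have h2 := ENNReal.rpow_le_rpow hk.le (by positivity : (0:ℝ) ≤ (k : ℝ))
      rwa [← ENNReal.rpow_mul, one_div, inv_mul_cancel₀ hknz, ENNReal.rpow_one] at h2
    rw [← hrr, ← ENNReal.coe_rpow_of_nonneg _ (by positivity), ENNReal.coe_le_coe] at h1
    calc ‖M ^ k‖ = ((‖M ^ k‖₊ : NNReal) : ℝ) := (coe_nnnorm _).symm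
      _ ≤ ((r' ^ (k : ℝ) : NNReal) : ℝ) := by exact_mod_cast h1
      _ = (r' : ℝ) ^ k := by rw [NNReal.coe_rpow, Real.rpow_natCast]
  exact squeeze_zero' (Eventually.of_forall fun k => norm_nonneg _) hbound
    (tendsto_pow_atTop_nhds_zero_of_lt_one r'.coe_nonneg hr'lt)

/-- The closed-loop form of the DARE. -/
lemma dare_closed_loop {n m : ℕ} {A : Matrix (Fin n) (Fin n) ℝ} {B : Matrix (Fin n) (Fin m) ℝ}
    {Q : Matrix (Fin n) (Fin n) ℝ} {S : Matrix (Fin n) (Fin m) ℝ}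
    {R : Matrix (Fin m) (Fin m) ℝ} {X : Matrix (Fin n) (Fin n) ℝ}
    (h : IsDARESolution A B Q S R X) :
    Aᵀ * X * (A - B * gain A B S R X) = X - Q + S * gain A B S R X ∧
    Bᵀ * X * (A - B * gain A B S R X) = R * gain A B S R X - Sᵀ := by
  obtain ⟨hXs, hW, hD⟩ := h
  set K := gain A B S R X with hKdef
  set W := R + Bᵀ * X * B with hWdef
  have hWdet : IsUnit W.det := (Matrix.isUnit_iff_isUnit_det W).mp hW
  have hWinv : W * W⁻¹ = 1 := Matrix.mul_nonsing_inv W hWdet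
  have hWinv' : W⁻¹ * W = 1 := Matrix.nonsing_inv_mul W hWdet
  have hK : K = W⁻¹ * (Bᵀ * X * A + Sᵀ) := rfl
  have hWK : W * K = Bᵀ * X * A + Sᵀ := by rw [hK, ← Matrix.mul_assoc, hWinv, Matrix.one_mul]
  have htr : (Aᵀ * X * B + S)ᵀ = Bᵀ * X * A + Sᵀ := by
    rw [Matrix.transpose_add, Matrix.transpose_mul, Matrix.transpose_mul,
      Matrix.transpose_transpose, hXs.eq, Matrix.mul_assoc]
  have hD' : X = Aᵀ * X * A + Q - (Aᵀ * X * B + S) * K := by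
    calc X = Aᵀ * X * A + Q - (Aᵀ * X * B + S) * W⁻¹ * (Aᵀ * X * B + S)ᵀ := hD
      _ = Aᵀ * X * A + Q - (Aᵀ * X * B + S) * (W⁻¹ * (W * K)) := by
          rw [htr, ← hWK, Matrix.mul_assoc (Aᵀ * X * B + S) W⁻¹ (W * K)]
      _ = Aᵀ * X * A + Q - (Aᵀ * X * B + S) * K := by
          rw [← Matrix.mul_assoc W⁻¹ W K, hWinv', Matrix.one_mul]
  have hBXB : Bᵀ * X * B = W - R := by rw [hWdef]; abel
  constructor
  · calc Aᵀ * X * (A - B * K)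
        = (Aᵀ * X * A + Q - (Aᵀ * X * B + S) * K) - Q + S * K := by
          simp only [Matrix.mul_sub, Matrix.sub_mul, Matrix.mul_add, Matrix.add_mul,
            Matrix.mul_assoc]
          abel
      _ = X - Q + S * K := by rw [← hD']
  · calc Bᵀ * X * (A - B * K)
        = (Bᵀ * X * A + Sᵀ) - Sᵀ - (Bᵀ * X * B) * K := by
          simp only [Matrix.mul_sub, Matrix.sub_mul, Matrix.mul_add, Matrix.add_mul,
            Matrix.mul_assoc]
          abel
      _ = W * K - Sᵀ - (W - R) * K := by rw [hWK, hBXB]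
      _ = R * K - Sᵀ := by
          simp only [Matrix.sub_mul]
          abel

/-- Stabilizing solutions of the DARE are unique. -/
theorem stabilizing_solution_unique {n m : ℕ}
    (A : Matrix (Fin n) (Fin n) ℝ) (B : Matrix (Fin n) (Fin m) ℝ)
    (Q : Matrix (Fin n) (Fin n) ℝ) (S : Matrix (Fin n) (Fin m) ℝ)
    (R : Matrix (Fin m) (Fin m) ℝ) (hQsymm : Q.IsSymm) (hRsymm : R.IsSymm)
    (X₁ X₂ : Matrix (Fin n) (Fin n) ℝ)
    (h₁ : IsStabilizingSolution A B Q S R X₁)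
    (h₂ : IsStabilizingSolution A B Q S R X₂) :
    X₁ = X₂ := by
  classical
  obtain ⟨hd₁, hst₁⟩ := h₁
  obtain ⟨hd₂, hst₂⟩ := h₂
  have hX1s : X₁.IsSymm := hd₁.1
  have hX2s : X₂.IsSymm := hd₂.1
  obtain ⟨fa1, fb1⟩ := dare_closed_loop hd₁
  obtain ⟨fa2, fb2⟩ := dare_closed_loop hd₂
  set K₁ := gain A B S R X₁ with hK₁def
  set K₂ := gain A B S R X₂ with hK₂def
  -- transposed closed-loop identities for X₁
  have h3 : (Aᵀ - K₁ᵀ * Bᵀ) * X₁ * A = X₁ - Q + K₁ᵀ * Sᵀ := by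
    have h := congrArg Matrix.transpose fa1
    simpa only [Matrix.transpose_mul, Matrix.transpose_sub, Matrix.transpose_add,
      Matrix.transpose_transpose, hX1s.eq, hQsymm.eq, Matrix.mul_assoc] using h
  have h1 : (Aᵀ - K₁ᵀ * Bᵀ) * X₁ * B = K₁ᵀ * R - S := by
    have h := congrArg Matrix.transpose fb1
    simpa only [Matrix.transpose_mul, Matrix.transpose_sub, Matrix.transpose_add,
      Matrix.transpose_transpose, hX1s.eq, hRsymm.eq, Matrix.mul_assoc] using h
  -- the key difference identity
  have key : (A - B * K₁)ᵀ * (X₁ - X₂) * (A - B * K₂) = X₁ - X₂ := by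
    rw [Matrix.transpose_sub, Matrix.transpose_mul]
    calc (Aᵀ - K₁ᵀ * Bᵀ) * (X₁ - X₂) * (A - B * K₂)
        = ((Aᵀ - K₁ᵀ * Bᵀ) * X₁ * A) - ((Aᵀ - K₁ᵀ * Bᵀ) * X₁ * B) * K₂
          - (Aᵀ * X₂ * (A - B * K₂)) + K₁ᵀ * (Bᵀ * X₂ * (A - B * K₂)) := by
          simp only [Matrix.mul_sub, Matrix.sub_mul, Matrix.mul_add, Matrix.add_mul,
            Matrix.mul_assoc]
          abel
      _ = (X₁ - Q + K₁ᵀ * Sᵀ) - (K₁ᵀ * R - S) * K₂ - (X₂ - Q + S * K₂)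
          + K₁ᵀ * (R * K₂ - Sᵀ) := by rw [h3, h1, fa2, fb2]
      _ = X₁ - X₂ := by
          simp only [Matrix.mul_sub, Matrix.sub_mul, Matrix.mul_add, Matrix.add_mul,
            Matrix.mul_assoc]
          abel
  -- iterate the identity
  have hiter : ∀ k : ℕ, ((A - B * K₁)ᵀ) ^ k * (X₁ - X₂) * (A - B * K₂) ^ k = X₁ - X₂ := by
    intro k
    induction k with
    | zero => simp
    | succ k ih =>
      calc ((A - B * K₁)ᵀ) ^ (k + 1) * (X₁ - X₂) * (A - B * K₂) ^ (k + 1)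
          = ((A - B * K₁)ᵀ) ^ k * ((A - B * K₁)ᵀ * (X₁ - X₂) * (A - B * K₂))
            * (A - B * K₂) ^ k := by
            rw [pow_succ, pow_succ']
            simp only [Matrix.mul_assoc]
        _ = ((A - B * K₁)ᵀ) ^ k * (X₁ - X₂) * (A - B * K₂) ^ k := by rw [key]
        _ = X₁ - X₂ := ih
  -- pass to ℂ
  set φ : Matrix (Fin n) (Fin n) ℝ →+* Matrix (Fin n) (Fin n) ℂ :=
    Complex.ofRealHom.mapMatrix with hφdef
  have hφmap : ∀ M : Matrix (Fin n) (Fin n) ℝ, φ M = M.map Complex.ofReal := fun _ => rfl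
  have hc1 : Filter.Tendsto (fun k : ℕ => ‖(φ ((A - B * K₁)ᵀ)) ^ k‖)
      Filter.atTop (nhds 0) := by
    apply tendsto_norm_pow_of_spectralRadius_lt_one
    have : φ ((A - B * K₁)ᵀ) = ((A - B * K₁).map Complex.ofReal)ᵀ := by
      rw [hφmap, Matrix.transpose_map]
    rw [this, spectralRadius_transpose_aux]
    exact hst₁
  have hc2 : Filter.Tendsto (fun k : ℕ => ‖(φ (A - B * K₂)) ^ k‖)
      Filter.atTop (nhds 0) := by
    apply tendsto_norm_pow_of_spectralRadius_lt_one
    rw [hφmap]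
    exact hst₂
  have hbound : ∀ k : ℕ, ‖φ (X₁ - X₂)‖
      ≤ ‖(φ ((A - B * K₁)ᵀ)) ^ k‖ * ‖φ (X₁ - X₂)‖ * ‖(φ (A - B * K₂)) ^ k‖ := by
    intro k
    have he : φ (X₁ - X₂)
        = (φ ((A - B * K₁)ᵀ)) ^ k * φ (X₁ - X₂) * (φ (A - B * K₂)) ^ k := by
      rw [← map_pow, ← map_pow, ← RingHom.map_mul, ← RingHom.map_mul, hiter k]
    calc ‖φ (X₁ - X₂)‖
        = ‖(φ ((A - B * K₁)ᵀ)) ^ k * φ (X₁ - X₂) * (φ (A - B * K₂)) ^ k‖ := by rw [← he]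
      _ ≤ ‖(φ ((A - B * K₁)ᵀ)) ^ k * φ (X₁ - X₂)‖ * ‖(φ (A - B * K₂)) ^ k‖ :=
          norm_mul_le _ _
      _ ≤ ‖(φ ((A - B * K₁)ᵀ)) ^ k‖ * ‖φ (X₁ - X₂)‖ * ‖(φ (A - B * K₂)) ^ k‖ :=
          mul_le_mul_of_nonneg_right (norm_mul_le _ _) (norm_nonneg _)
  have hlim : Filter.Tendsto
      (fun k : ℕ => ‖(φ ((A - B * K₁)ᵀ)) ^ k‖ * ‖φ (X₁ - X₂)‖ * ‖(φ (A - B * K₂)) ^ k‖)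
      Filter.atTop (nhds 0) := by
    have := (hc1.mul_const ‖φ (X₁ - X₂)‖).mul hc2
    simpa using this
  have hle : ‖φ (X₁ - X₂)‖ ≤ 0 := ge_of_tendsto' hlim hbound
  have hzero : φ (X₁ - X₂) = 0 := norm_le_zero_iff.mp hle
  have hsub : X₁ - X₂ = 0 := by
    ext i j
    have h' : Complex.ofReal ((X₁ - X₂) i j) = 0 := by
      have h := congrFun (congrFun hzero i) j
      simpa [hφmap, Matrix.map_apply] using h
    exact_mod_cast h'
  exact sub_eq_zero.mp hsub
end

section
/- Let X ∈ ℝ^{n×n} be symmetric positive semidefinite, let R be positive definite, let W := R + BᵀXB be invertible, and set K_X := W⁻¹(BᵀXA + Sᵀ). If A − B R⁻¹ Sᵀ is nonsingular, then A − B K_X is nonsingular. -/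
open Matrix

/-- If `X` is symmetric positive semidefinite, `R` is positive definite,
`W = R + BᵀXB` is invertible, and `A - B R⁻¹ Sᵀ` is nonsingular, then `A - B K_X` is
nonsingular, where `K_X = W⁻¹ (BᵀXA + Sᵀ)`. -/
theorem closedLoop_nonsingular {n m : ℕ}
    (A : Matrix (Fin n) (Fin n) ℝ) (B : Matrix (Fin n) (Fin m) ℝ)
    (S : Matrix (Fin n) (Fin m) ℝ) (R : Matrix (Fin m) (Fin m) ℝ) (hRsymm : R.IsSymm)
    (X : Matrix (Fin n) (Fin n) ℝ) (hXsymm : X.IsSymm) (hXpsd : X.PosSemidef)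
    (hRpd : R.PosDef)
    (hW : IsUnit (R + Bᵀ * X * B))
    (hns : IsUnit (A - B * R⁻¹ * Sᵀ)) :
    IsUnit (A - B * ((R + Bᵀ * X * B)⁻¹ * (Bᵀ * X * A + Sᵀ))) := by
  have hWdet : IsUnit (R + Bᵀ * X * B).det := (Matrix.isUnit_iff_isUnit_det _).mp hW
  have hRdet : IsUnit R.det := isUnit_iff_ne_zero.mpr (ne_of_gt hRpd.det_pos)
  have hWinv : (R + Bᵀ * X * B) * (R + Bᵀ * X * B)⁻¹ = 1 := Matrix.mul_nonsing_inv _ hWdet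
  have hRinv : R⁻¹ * R = 1 := Matrix.nonsing_inv_mul R hRdet
  have h1 : (1 + B * R⁻¹ * Bᵀ * X) * B = B * R⁻¹ * (R + Bᵀ * X * B) := by
    rw [Matrix.mul_add, Matrix.mul_assoc B R⁻¹ R, hRinv, Matrix.mul_one, Matrix.add_mul, Matrix.one_mul]
    simp only [Matrix.mul_assoc]
  have key : (1 + B * R⁻¹ * Bᵀ * X) * (A - B * ((R + Bᵀ * X * B)⁻¹ * (Bᵀ * X * A + Sᵀ)))
      = A - B * R⁻¹ * Sᵀ := by
    rw [Matrix.mul_sub, ← Matrix.mul_assoc _ B _, h1,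
      Matrix.mul_assoc (B * R⁻¹) (R + Bᵀ * X * B), ← Matrix.mul_assoc (R + Bᵀ * X * B),
      hWinv, Matrix.one_mul, Matrix.mul_add]
    simp only [Matrix.add_mul, Matrix.one_mul, Matrix.mul_assoc, sub_eq_add_neg, neg_add]
    abel
  have hdet := (Matrix.isUnit_iff_isUnit_det _).mp hns
  rw [← key, Matrix.det_mul] at hdet
  exact (Matrix.isUnit_iff_isUnit_det _).mpr (isUnit_of_mul_isUnit_right hdet)
end

section
/- Let X ∈ ℝ^{n×n} be symmetric, let R be invertible, let W := R + BᵀXB be invertible, and set K_X := W⁻¹(BᵀXA + Sᵀ). Then (I_n + B R⁻¹ Bᵀ X)(A − B K_X) = A − B R⁻¹ Sᵀ. -/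
open Matrix

/-- If `X` is symmetric, `R` is invertible and `W = R + BᵀXB` is invertible,
then `(I + B R⁻¹ Bᵀ X)(A - B K_X) = A - B R⁻¹ Sᵀ`, where `K_X = W⁻¹ (BᵀXA + Sᵀ)`. -/
theorem closedLoop_factorization {n m : ℕ}
    (A : Matrix (Fin n) (Fin n) ℝ) (B : Matrix (Fin n) (Fin m) ℝ)
    (S : Matrix (Fin n) (Fin m) ℝ) (R : Matrix (Fin m) (Fin m) ℝ) (hRsymm : R.IsSymm)
    (X : Matrix (Fin n) (Fin n) ℝ) (hXsymm : X.IsSymm)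
    (hR : IsUnit R)
    (hW : IsUnit (R + Bᵀ * X * B)) :
    ((1 : Matrix (Fin n) (Fin n) ℝ) + B * R⁻¹ * Bᵀ * X) *
        (A - B * ((R + Bᵀ * X * B)⁻¹ * (Bᵀ * X * A + Sᵀ))) =
      A - B * R⁻¹ * Sᵀ := by
  have hRinv : R⁻¹ * R = 1 := nonsing_inv_mul R ((isUnit_iff_isUnit_det R).mp hR)
  have hWinv : (R + Bᵀ * X * B) * (R + Bᵀ * X * B)⁻¹ = 1 :=
    mul_nonsing_inv _ ((isUnit_iff_isUnit_det _).mp hW)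
  have key : ((1 : Matrix (Fin n) (Fin n) ℝ) + B * R⁻¹ * Bᵀ * X) * B
      = B * R⁻¹ * (R + Bᵀ * X * B) := by
    rw [Matrix.add_mul, Matrix.one_mul, Matrix.mul_add, Matrix.mul_assoc B R⁻¹ R, hRinv,
      Matrix.mul_one]
    simp [Matrix.mul_assoc]
  calc ((1 : Matrix (Fin n) (Fin n) ℝ) + B * R⁻¹ * Bᵀ * X) *
        (A - B * ((R + Bᵀ * X * B)⁻¹ * (Bᵀ * X * A + Sᵀ)))
      = ((1 : Matrix (Fin n) (Fin n) ℝ) + B * R⁻¹ * Bᵀ * X) * A -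
        (B * R⁻¹ * (R + Bᵀ * X * B)) * ((R + Bᵀ * X * B)⁻¹ * (Bᵀ * X * A + Sᵀ)) := by
        rw [Matrix.mul_sub, ← Matrix.mul_assoc, key]
    _ = ((1 : Matrix (Fin n) (Fin n) ℝ) + B * R⁻¹ * Bᵀ * X) * A -
        B * R⁻¹ * (Bᵀ * X * A + Sᵀ) := by
        rw [Matrix.mul_assoc (B * R⁻¹) (R + Bᵀ * X * B) ((R + Bᵀ * X * B)⁻¹ * (Bᵀ * X * A + Sᵀ)),
          ← Matrix.mul_assoc (R + Bᵀ * X * B), hWinv,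
          Matrix.one_mul]
    _ = A - B * R⁻¹ * Sᵀ := by
        rw [Matrix.add_mul, Matrix.one_mul, Matrix.mul_add]
        simp only [Matrix.mul_assoc]
        abel
end

section
/- Let X ∈ ℝ^{n×n} be a symmetric solution of the DARE with W := R + BᵀXB invertible, let K := W⁻¹(BᵀXA + Sᵀ), and let B_d ∈ ℝ^{n×k}. For any vectors x ∈ ℝⁿ, u ∈ ℝᵐ, d ∈ ℝᵏ, v₊ ∈ ℝⁿ, define x₊ := Ax + Bu + B_d d, v := (A − BK)ᵀ(v₊ + X B_d d), g := Bᵀv₊ + BᵀX B_d d, and u° := −Kx − W⁻¹ g. Then the following completion-of-squares identity holds: xᵀQx + 2xᵀSu + uᵀRu + x₊ᵀXx₊ − xᵀXx + 2⟨v₊, x₊⟩ − 2⟨v, x⟩ = (u − u°)ᵀ W (u − u°) − gᵀ W⁻¹ g + dᵀ B_dᵀ X B_d d + 2⟨v₊, B_d d⟩. -/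
open Matrix

lemma dp_swap {n m : ℕ} (M : Matrix (Fin n) (Fin m) ℝ) (a : Fin n → ℝ) (b : Fin m → ℝ) :
    a ⬝ᵥ M.mulVec b = b ⬝ᵥ Mᵀ.mulVec a := by
  rw [dotProduct_mulVec, mulVec_transpose, dotProduct_comm]

lemma dpc {n p : ℕ} (M : Matrix (Fin n) (Fin p) ℝ) (a : Fin p → ℝ) (b : Fin n → ℝ) :
    (M.mulVec a) ⬝ᵥ b = a ⬝ᵥ Mᵀ.mulVec b := by
  rw [dotProduct_comm]; exact dp_swap M b a

/-- Completion-of-squares identity with disturbance and adjoint variable.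
For a symmetric DARE solution `X` with `W = R + BᵀXB` invertible, gain
`K = W⁻¹(BᵀXA + Sᵀ)`, and `x₊ = Ax + Bu + B_d d`, `v = (A-BK)ᵀ(v₊ + X B_d d)`,
`g = Bᵀv₊ + BᵀX B_d d`, `u° = -Kx - W⁻¹g`:
`xᵀQx + 2xᵀSu + uᵀRu + x₊ᵀXx₊ - xᵀXx + 2⟨v₊,x₊⟩ - 2⟨v,x⟩
  = (u-u°)ᵀW(u-u°) - gᵀW⁻¹g + dᵀB_dᵀXB_d d + 2⟨v₊, B_d d⟩`. -/
theorem dare_completion_of_squares_disturbance {n m k : ℕ}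
    (A : Matrix (Fin n) (Fin n) ℝ) (B : Matrix (Fin n) (Fin m) ℝ)
    (Q : Matrix (Fin n) (Fin n) ℝ) (S : Matrix (Fin n) (Fin m) ℝ)
    (R : Matrix (Fin m) (Fin m) ℝ) (hQsymm : Q.IsSymm) (hRsymm : R.IsSymm)
    (X : Matrix (Fin n) (Fin n) ℝ) (hXsymm : X.IsSymm)
    (W : Matrix (Fin m) (Fin m) ℝ) (hWdef : W = R + Bᵀ * X * B) (hW : IsUnit W)
    (hDARE : X = Aᵀ * X * A + Q - (Aᵀ * X * B + S) * W⁻¹ * (Aᵀ * X * B + S)ᵀ)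
    (K : Matrix (Fin m) (Fin n) ℝ) (hKdef : K = W⁻¹ * (Bᵀ * X * A + Sᵀ))
    (B_d : Matrix (Fin n) (Fin k) ℝ)
    (x : Fin n → ℝ) (u : Fin m → ℝ) (d : Fin k → ℝ) (vplus : Fin n → ℝ)
    (xplus : Fin n → ℝ) (hxplus : xplus = A.mulVec x + B.mulVec u + B_d.mulVec d)
    (v : Fin n → ℝ) (hv : v = (A - B * K)ᵀ.mulVec (vplus + (X * B_d).mulVec d))
    (g : Fin m → ℝ) (hg : g = Bᵀ.mulVec vplus + (Bᵀ * X * B_d).mulVec d)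
    (u0 : Fin m → ℝ) (hu0 : u0 = -(K.mulVec x) - W⁻¹.mulVec g) :
    x ⬝ᵥ Q.mulVec x + 2 * (x ⬝ᵥ S.mulVec u) + u ⬝ᵥ R.mulVec u +
        xplus ⬝ᵥ X.mulVec xplus - x ⬝ᵥ X.mulVec x +
        2 * (vplus ⬝ᵥ xplus) - 2 * (v ⬝ᵥ x) =
      (u - u0) ⬝ᵥ W.mulVec (u - u0) - g ⬝ᵥ W⁻¹.mulVec g +
        d ⬝ᵥ (B_dᵀ * X * B_d).mulVec d + 2 * (vplus ⬝ᵥ B_d.mulVec d) := by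
  have hWdet : IsUnit W.det := (Matrix.isUnit_iff_isUnit_det W).mp hW
  have hWs : Wᵀ = W := by
    rw [hWdef]; simp [transpose_add, transpose_mul, hXsymm.eq, hRsymm.eq, Matrix.mul_assoc]
  have hWis : W⁻¹ᵀ = W⁻¹ := by rw [Matrix.transpose_nonsing_inv, hWs]
  have hWW : W * W⁻¹ = 1 := Matrix.mul_nonsing_inv W hWdet
  have hWW' : W⁻¹ * W = 1 := Matrix.nonsing_inv_mul W hWdet
  have hKt : Kᵀ = (Aᵀ * X * B + S) * W⁻¹ := by
    rw [hKdef, transpose_mul, hWis, transpose_add, transpose_mul, transpose_mul,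
      transpose_transpose, transpose_transpose, hXsymm.eq, ← Matrix.mul_assoc]
  have hWK : W * K = Bᵀ * X * A + Sᵀ := by
    rw [hKdef, ← Matrix.mul_assoc, hWW, Matrix.one_mul]
  have hKW : Kᵀ * W = Aᵀ * X * B + S := by
    rw [hKt, Matrix.mul_assoc, hWW', Matrix.mul_one]
  have hT : (Aᵀ * X * B + S)ᵀ = Bᵀ * X * A + Sᵀ := by
    rw [transpose_add, transpose_mul, transpose_mul, transpose_transpose,
      hXsymm.eq, ← Matrix.mul_assoc]
  have hD2 : X = Aᵀ * X * A + Q - Kᵀ * (W * K) := by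
    rw [hWK, ← hT, hKt]; exact hDARE
  have hD : x ⬝ᵥ X.mulVec x =
      x ⬝ᵥ (Aᵀ * X * A).mulVec x + x ⬝ᵥ Q.mulVec x - x ⬝ᵥ (Kᵀ * (W * K)).mulVec x := by
    conv_lhs => rw [hD2]
    simp [sub_mulVec, add_mulVec, dotProduct_add, dotProduct_sub]
  subst hxplus hv hg hu0
  -- cancel lemmas for inverse
  have hc1 : ∀ (z : Fin m → ℝ), W.mulVec (W⁻¹.mulVec z) = z := by
    intro z; rw [mulVec_mulVec, hWW, one_mulVec]
  have hc2 : ∀ (z : Fin m → ℝ), W⁻¹.mulVec (W.mulVec z) = z := by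
    intro z; rw [mulVec_mulVec, hWW', one_mulVec]
  have hmc : ∀ (p : ℕ) (Z : Matrix (Fin m) (Fin p) ℝ), W * (W⁻¹ * Z) = Z := by
    intro p Z; rw [← Matrix.mul_assoc, hWW, Matrix.one_mul]
  have hmc' : ∀ (p : ℕ) (Z : Matrix (Fin m) (Fin p) ℝ), W⁻¹ * (W * Z) = Z := by
    intro p Z; rw [← Matrix.mul_assoc, hWW', Matrix.one_mul]
  simp only [transpose_sub, transpose_add, transpose_mul, transpose_transpose, hXsymm.eq,
    hQsymm.eq, hRsymm.eq, hWis, hWs,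
    sub_mulVec, add_mulVec, mulVec_add, mulVec_sub, mulVec_neg, neg_mulVec,
    mulVec_mulVec, dpc, dotProduct_add, add_dotProduct, dotProduct_sub, sub_dotProduct,
    dotProduct_neg, neg_dotProduct, sub_neg_eq_add, Matrix.mul_sub, Matrix.sub_mul, Matrix.mul_assoc,
    hmc, hmc', hWW, hWW', Matrix.mul_one, Matrix.one_mul, Matrix.one_mulVec]
  have e1 : u ⬝ᵥ (Bᵀ*(X*A)) *ᵥ x = x ⬝ᵥ (Aᵀ*(X*B)) *ᵥ u := by
    rw [dp_swap]; simp [transpose_mul, transpose_transpose, hXsymm.eq, hWis, Matrix.mul_assoc]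
  have e2 : u ⬝ᵥ Sᵀ *ᵥ x = x ⬝ᵥ S *ᵥ u := by
    rw [dp_swap]; simp
  have e3 : d ⬝ᵥ (B_dᵀ*(X*A)) *ᵥ x = x ⬝ᵥ (Aᵀ*(X*B_d)) *ᵥ d := by
    rw [dp_swap]; simp [transpose_mul, transpose_transpose, hXsymm.eq, hWis, Matrix.mul_assoc]
  have e4 : d ⬝ᵥ (B_dᵀ*(X*B)) *ᵥ u = u ⬝ᵥ (Bᵀ*(X*B_d)) *ᵥ d := by
    rw [dp_swap]; simp [transpose_mul, transpose_transpose, hXsymm.eq, hWis, Matrix.mul_assoc]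
  have e5 : u ⬝ᵥ Bᵀ *ᵥ vplus = vplus ⬝ᵥ B *ᵥ u := by
    rw [dp_swap]; simp
  have e6 : x ⬝ᵥ (Kᵀ*Bᵀ) *ᵥ vplus = vplus ⬝ᵥ (B*K) *ᵥ x := by
    rw [dp_swap]; simp [transpose_mul, transpose_transpose]
  have e7 : d ⬝ᵥ (B_dᵀ*(X*(B*K))) *ᵥ x = x ⬝ᵥ (Kᵀ*(Bᵀ*(X*B_d))) *ᵥ d := by
    rw [dp_swap]; simp [transpose_mul, transpose_transpose, hXsymm.eq, hWis, Matrix.mul_assoc]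
  have e8 : d ⬝ᵥ (B_dᵀ*(X*(B*(W⁻¹*Bᵀ)))) *ᵥ vplus = vplus ⬝ᵥ (B*(W⁻¹*(Bᵀ*(X*B_d)))) *ᵥ d := by
    rw [dp_swap]; simp [transpose_mul, transpose_transpose, hXsymm.eq, hWis, Matrix.mul_assoc]
  have e9 : u ⬝ᵥ (W*K) *ᵥ x = x ⬝ᵥ (Kᵀ*W) *ᵥ u := by
    rw [dp_swap]; simp [transpose_mul, transpose_transpose, hWs, Matrix.mul_assoc]
  have r1 : x ⬝ᵥ (Kᵀ*W) *ᵥ u = x ⬝ᵥ (Aᵀ*(X*B)) *ᵥ u + x ⬝ᵥ S *ᵥ u := by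
    rw [hKW, ← Matrix.mul_assoc, add_mulVec, dotProduct_add]
  have r2 : u ⬝ᵥ W *ᵥ u = u ⬝ᵥ R *ᵥ u + u ⬝ᵥ (Bᵀ*(X*B)) *ᵥ u := by
    rw [hWdef, ← Matrix.mul_assoc, add_mulVec, dotProduct_add]
  have hD' : x ⬝ᵥ X *ᵥ x =
      x ⬝ᵥ (Aᵀ*(X*A)) *ᵥ x + x ⬝ᵥ Q *ᵥ x - x ⬝ᵥ (Kᵀ*(W*K)) *ᵥ x := by
    rw [hD]; simp only [Matrix.mul_assoc]
  rw [e1, e3, e4, e5, e6, e7, e8, e9]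
  linear_combination -hD' - r2 - 2*r1
end

section
/- Let X ∈ ℝ^{n×n} be a symmetric solution of the DARE with W := R + BᵀXB invertible, let K := W⁻¹(BᵀXA + Sᵀ), and let B_d ∈ ℝ^{n×k}. Let x, v : ℤ → ℝⁿ, u : ℤ → ℝᵐ, d : ℤ → ℝᵏ all be in ℓ2 and satisfy, for every t ∈ ℤ, the dynamics x_{t+1} = A x_t + B u_t + B_d d_t and the adjoint recursion v_t = (A − BK)ᵀ(v_{t+1} + X B_d d_t). Define g_t := Bᵀv_{t+1} + BᵀX B_d d_t and u°_t := −K x_t − W⁻¹ g_t. Then the families t ↦ x_tᵀQx_t + 2x_tᵀS u_t + u_tᵀR u_t, t ↦ (u_t − u°_t)ᵀ W (u_t − u°_t), and t ↦ −g_tᵀ W⁻¹ g_t + d_tᵀ B_dᵀ X B_d d_t + 2⟨v_{t+1}, B_d d_t⟩ are all summable over ℤ, and ∑_{t∈ℤ} [x_tᵀQx_t + 2x_tᵀS u_t + u_tᵀR u_t] = ∑_{t∈ℤ} (u_t − u°_t)ᵀ W (u_t − u°_t) + ∑_{t∈ℤ} [−g_tᵀ W⁻¹ g_t + d_tᵀ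 B_dᵀ X B_d d_t + 2⟨v_{t+1}, B_d d_t⟩]. -/
open Matrix

/-- A two-sided sequence `x : ℤ → ℝ^p` is in ℓ2 if the family of squared Euclidean
norms `t ↦ ‖x_t‖² = x_t ⬝ᵥ x_t` is summable over ℤ. -/
def MemL2 {p : ℕ} (x : ℤ → Fin p → ℝ) : Prop :=
  Summable fun t : ℤ => x t ⬝ᵥ x t

section Aux

open Filter Finset

private lemma dot_sq_le {p : ℕ} (x : Fin p → ℝ) (i : Fin p) : x i ^ 2 ≤ x ⬝ᵥ x := by
  have h : x ⬝ᵥ x = ∑ j, x j ^ 2 := by simp [dotProduct, sq]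
  rw [h]
  exact Finset.single_le_sum (f := fun j => x j ^ 2) (fun j _ => sq_nonneg _) (Finset.mem_univ i)

private lemma bilin_summable {p q : ℕ} (M : Matrix (Fin p) (Fin q) ℝ) {x : ℤ → Fin p → ℝ}
    {y : ℤ → Fin q → ℝ} (hx : MemL2 x) (hy : MemL2 y) :
    Summable (fun t => x t ⬝ᵥ M.mulVec (y t)) := by
  set C : ℝ := ∑ i, ∑ j, |M i j| with hC
  apply Summable.of_abs
  have hb : ∀ t, |x t ⬝ᵥ M.mulVec (y t)| ≤ (C/2) * (x t ⬝ᵥ x t + y t ⬝ᵥ y t) := by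
    intro t
    have h1 : |x t ⬝ᵥ M.mulVec (y t)| ≤ ∑ i, ∑ j, |M i j| * (|x t i| * |y t j|) := by
      rw [dotProduct]
      refine (Finset.abs_sum_le_sum_abs _ _).trans (Finset.sum_le_sum fun i _ => ?_)
      simp only [Matrix.mulVec, dotProduct, Finset.mul_sum]
      refine (Finset.abs_sum_le_sum_abs _ _).trans (Finset.sum_le_sum fun j _ => ?_)
      rw [abs_mul, abs_mul]
      ring_nf
      nlinarith [abs_nonneg (x t i), abs_nonneg (y t j), abs_nonneg (M i j)]
    refine h1.trans ?_
    have h2 : ∀ i j, |M i j| * (|x t i| * |y t j|) ≤ |M i j| * ((x t ⬝ᵥ x t + y t ⬝ᵥ y t)/2) := by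
      intro i j
      refine mul_le_mul_of_nonneg_left ?_ (abs_nonneg _)
      nlinarith [sq_nonneg (|x t i| - |y t j|), sq_abs (x t i), sq_abs (y t j),
        dot_sq_le (x t) i, dot_sq_le (y t) j]
    calc ∑ i, ∑ j, |M i j| * (|x t i| * |y t j|)
        ≤ ∑ i, ∑ j, |M i j| * ((x t ⬝ᵥ x t + y t ⬝ᵥ y t)/2) :=
          Finset.sum_le_sum fun i _ => Finset.sum_le_sum fun j _ => h2 i j
      _ = (C/2) * (x t ⬝ᵥ x t + y t ⬝ᵥ y t) := by
          simp only [← Finset.sum_mul, hC]; ring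
  refine Summable.of_nonneg_of_le (fun t => abs_nonneg _) hb ?_
  exact ((hx.add hy).mul_left (C/2))

private lemma dot_summable {p : ℕ} {x y : ℤ → Fin p → ℝ} (hx : MemL2 x) (hy : MemL2 y) :
    Summable (fun t => x t ⬝ᵥ y t) := by
  have := bilin_summable (1 : Matrix (Fin p) (Fin p) ℝ) hx hy
  simpa [Matrix.one_mulVec] using this

private lemma MemL2.matmul {p q : ℕ} (M : Matrix (Fin q) (Fin p) ℝ) {x : ℤ → Fin p → ℝ}
    (hx : MemL2 x) : MemL2 (fun t => M.mulVec (x t)) := by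
  have h := bilin_summable (Mᵀ * M) hx hx
  refine h.congr fun t => ?_
  rw [← Matrix.mulVec_mulVec, Matrix.dotProduct_mulVec, Matrix.vecMul_transpose]

private lemma MemL2.add' {p : ℕ} {x y : ℤ → Fin p → ℝ} (hx : MemL2 x) (hy : MemL2 y) :
    MemL2 (fun t => x t + y t) := by
  have hx' : Summable (fun t => x t ⬝ᵥ x t) := hx
  have hy' : Summable (fun t => y t ⬝ᵥ y t) := hy
  have h : Summable (fun t => x t ⬝ᵥ x t + (2 * (x t ⬝ᵥ y t) + y t ⬝ᵥ y t)) :=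
    Summable.add hx' (Summable.add ((dot_summable hx hy).mul_left 2) hy')
  refine h.congr fun t => ?_
  simp only [dotProduct_add, add_dotProduct, dotProduct_comm (y t) (x t)]
  ring

private lemma MemL2.shift {p : ℕ} {x : ℤ → Fin p → ℝ} (hx : MemL2 x) :
    MemL2 (fun t => x (t + 1)) := by
  have hx' : Summable (fun t => x t ⬝ᵥ x t) := hx
  have h : Summable ((fun t => x t ⬝ᵥ x t) ∘ (· + (1:ℤ))) :=
    Summable.comp_injective hx' (add_left_injective 1)
  exact h

private lemma tele (φ : ℤ → ℝ) (N : ℕ) :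
    ∑ t ∈ Finset.Icc (-(N:ℤ)) N, (φ t - φ (t+1)) = φ (-(N:ℤ)) - φ ((N:ℤ)+1) := by
  induction N with
  | zero => simp
  | succ N ih =>
    push_cast
    have hset : Finset.Icc (-(N+1:ℤ)) (N+1:ℤ) =
        insert (-(N+1:ℤ)) (insert ((N:ℤ)+1) (Finset.Icc (-(N:ℤ)) N)) := by
      ext t; simp [Finset.mem_Icc]; omega
    rw [hset, Finset.sum_insert, Finset.sum_insert, ih]
    · ring
    · simp [Finset.mem_Icc]
    · simp [Finset.mem_Icc]; omega

private lemma mdot {p q : ℕ} (M : Matrix (Fin p) (Fin q) ℝ) (u : Fin q → ℝ) (w : Fin p → ℝ) :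
    (M.mulVec u) ⬝ᵥ w = u ⬝ᵥ (Mᵀ.mulVec w) := by
  rw [Matrix.dotProduct_mulVec, Matrix.vecMul_transpose]

private lemma dflip {p q : ℕ} (M : Matrix (Fin p) (Fin q) ℝ) (u : Fin p → ℝ) (w : Fin q → ℝ) :
    u ⬝ᵥ M.mulVec w = w ⬝ᵥ (Mᵀ.mulVec u) := by
  rw [dotProduct_comm, mdot]

set_option maxHeartbeats 2000000 in
private lemma key_identity {n m k : ℕ}
    (A : Matrix (Fin n) (Fin n) ℝ) (B : Matrix (Fin n) (Fin m) ℝ)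
    (Q : Matrix (Fin n) (Fin n) ℝ) (S : Matrix (Fin n) (Fin m) ℝ)
    (R : Matrix (Fin m) (Fin m) ℝ) (X : Matrix (Fin n) (Fin n) ℝ)
    (W : Matrix (Fin m) (Fin m) ℝ) (K : Matrix (Fin m) (Fin n) ℝ)
    (B_d : Matrix (Fin n) (Fin k) ℝ)
    (hXs : Xᵀ = X) (hWs : Wᵀ = W) (hVs : W⁻¹ᵀ = W⁻¹)
    (hWV : W * W⁻¹ = 1) (hVW : W⁻¹ * W = 1)
    (hWdef : W = R + Bᵀ * X * B)
    (hKW : W * K = Bᵀ * X * A + Sᵀ)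
    (hDARE' : Kᵀ * W * K = Q + Aᵀ * X * A - X)
    (a e : Fin n → ℝ) (b : Fin m → ℝ) (c : Fin k → ℝ) :
    a ⬝ᵥ Q.mulVec a + 2 * (a ⬝ᵥ S.mulVec b) + b ⬝ᵥ R.mulVec b
      = (b - (-(K.mulVec a) - W⁻¹.mulVec (Bᵀ.mulVec e + (Bᵀ*X*B_d).mulVec c))) ⬝ᵥ
          W.mulVec (b - (-(K.mulVec a) - W⁻¹.mulVec (Bᵀ.mulVec e + (Bᵀ*X*B_d).mulVec c)))
        + (-((Bᵀ.mulVec e + (Bᵀ*X*B_d).mulVec c) ⬝ᵥ W⁻¹.mulVec (Bᵀ.mulVec e + (Bᵀ*X*B_d).mulVec c))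
            + c ⬝ᵥ (B_dᵀ*X*B_d).mulVec c + 2 * (e ⬝ᵥ B_d.mulVec c))
        + ((a ⬝ᵥ X.mulVec a + 2 * (((A - B*K)ᵀ.mulVec (e + (X*B_d).mulVec c)) ⬝ᵥ a))
            - ((A.mulVec a + B.mulVec b + B_d.mulVec c) ⬝ᵥ X.mulVec (A.mulVec a + B.mulVec b + B_d.mulVec c)
                + 2 * (e ⬝ᵥ (A.mulVec a + B.mulVec b + B_d.mulVec c)))) := by
  have hWVl : ∀ {p : ℕ} (Z : Matrix (Fin m) (Fin p) ℝ), W * (W⁻¹ * Z) = Z := by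
    intro p Z; rw [← Matrix.mul_assoc, hWV, Matrix.one_mul]
  have hVWl : ∀ {p : ℕ} (Z : Matrix (Fin m) (Fin p) ℝ), W⁻¹ * (W * Z) = Z := by
    intro p Z; rw [← Matrix.mul_assoc, hVW, Matrix.one_mul]
  have h1 : a ⬝ᵥ (Kᵀ * W).mulVec b
      = a ⬝ᵥ (Aᵀ * (X * B)).mulVec b + a ⬝ᵥ S.mulVec b := by
    have : Kᵀ * W = Aᵀ * (X * B) + S := by
      have := congrArg Matrix.transpose hKW
      simp only [Matrix.transpose_mul, Matrix.transpose_add, Matrix.transpose_transpose,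
        hXs, hWs, Matrix.mul_assoc] at this
      rw [this]
    rw [this, Matrix.add_mulVec, dotProduct_add]
  have h2 : b ⬝ᵥ (W * K).mulVec a
      = a ⬝ᵥ (Aᵀ * (X * B)).mulVec b + a ⬝ᵥ S.mulVec b := by
    rw [dflip, Matrix.transpose_mul, hWs, ← h1]
  have h3 : a ⬝ᵥ (Kᵀ * (W * K)).mulVec a
      = a ⬝ᵥ Q.mulVec a + a ⬝ᵥ (Aᵀ * (X * A)).mulVec a - a ⬝ᵥ X.mulVec a := by
    rw [← Matrix.mul_assoc, hDARE']
    simp only [Matrix.add_mulVec, Matrix.sub_mulVec, dotProduct_add, dotProduct_sub,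
      Matrix.mul_assoc]
  have h4 : b ⬝ᵥ (Bᵀ * (X * A)).mulVec a = a ⬝ᵥ (Aᵀ * (X * B)).mulVec b := by
    rw [dflip]
    simp only [Matrix.transpose_mul, Matrix.transpose_transpose, hXs, Matrix.mul_assoc]
  have h5 : c ⬝ᵥ (B_dᵀ * (X * A)).mulVec a = a ⬝ᵥ (Aᵀ * (X * B_d)).mulVec c := by
    rw [dflip]
    simp only [Matrix.transpose_mul, Matrix.transpose_transpose, hXs, Matrix.mul_assoc]
  have h7 : a ⬝ᵥ (Kᵀ * Bᵀ).mulVec e = e ⬝ᵥ (B * K).mulVec a := by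
    rw [dflip]
    simp only [Matrix.transpose_mul, Matrix.transpose_transpose]
  have h8 : a ⬝ᵥ (Kᵀ * (Bᵀ * (X * B_d))).mulVec c
      = c ⬝ᵥ (B_dᵀ * (X * (B * K))).mulVec a := by
    rw [dflip]
    simp only [Matrix.transpose_mul, Matrix.transpose_transpose, hXs, Matrix.mul_assoc]
  have h9 : b ⬝ᵥ Bᵀ.mulVec e = e ⬝ᵥ B.mulVec b := by
    rw [dflip, Matrix.transpose_transpose]
  have hW6 : b ⬝ᵥ W.mulVec b = b ⬝ᵥ R.mulVec b + b ⬝ᵥ (Bᵀ * (X * B)).mulVec b := by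
    rw [hWdef]
    simp only [Matrix.add_mulVec, dotProduct_add, Matrix.mul_assoc]
  simp only [Matrix.sub_mulVec, Matrix.add_mulVec, Matrix.mulVec_add, Matrix.mulVec_sub,
    Matrix.mulVec_neg, Matrix.neg_mulVec, Matrix.mulVec_mulVec, Matrix.transpose_mul,
    Matrix.transpose_sub, Matrix.transpose_transpose, dotProduct_add, add_dotProduct,
    dotProduct_sub, sub_dotProduct, dotProduct_neg, neg_dotProduct, mdot,
    Matrix.mul_sub, Matrix.sub_mul, Matrix.mul_assoc, hXs, hVs, hWVl, hVWl, hWV, hVW,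
    Matrix.mul_one, Matrix.one_mul]
  rw [h1, h2, h3, h4, h5, h7, h8, h9, hW6]
  ring

end Aux

/-- Summation of the completion-of-squares identity along ℓ2 trajectories
of the dynamics `x_{t+1} = A x_t + B u_t + B_d d_t` and the adjoint recursion
`v_t = (A - BK)ᵀ (v_{t+1} + X B_d d_t)`. -/
theorem dare_sum_completion_of_squares {n m k : ℕ}
    (A : Matrix (Fin n) (Fin n) ℝ) (B : Matrix (Fin n) (Fin m) ℝ)
    (Q : Matrix (Fin n) (Fin n) ℝ) (S : Matrix (Fin n) (Fin m) ℝ)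
    (R : Matrix (Fin m) (Fin m) ℝ) (hQsymm : Q.IsSymm) (hRsymm : R.IsSymm)
    (X : Matrix (Fin n) (Fin n) ℝ) (hXsymm : X.IsSymm)
    (W : Matrix (Fin m) (Fin m) ℝ) (hWdef : W = R + Bᵀ * X * B) (hW : IsUnit W)
    (hDARE : X = Aᵀ * X * A + Q - (Aᵀ * X * B + S) * W⁻¹ * (Aᵀ * X * B + S)ᵀ)
    (K : Matrix (Fin m) (Fin n) ℝ) (hKdef : K = W⁻¹ * (Bᵀ * X * A + Sᵀ))
    (B_d : Matrix (Fin n) (Fin k) ℝ)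
    (x v : ℤ → Fin n → ℝ) (u : ℤ → Fin m → ℝ) (d : ℤ → Fin k → ℝ)
    (hx : MemL2 x) (hv : MemL2 v) (hu : MemL2 u) (hd : MemL2 d)
    (hdyn : ∀ t : ℤ, x (t + 1) = A.mulVec (x t) + B.mulVec (u t) + B_d.mulVec (d t))
    (hadj : ∀ t : ℤ, v t = (A - B * K)ᵀ.mulVec (v (t + 1) + (X * B_d).mulVec (d t)))
    (g : ℤ → Fin m → ℝ)
    (hg : ∀ t : ℤ, g t = Bᵀ.mulVec (v (t + 1)) + (Bᵀ * X * B_d).mulVec (d t))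
    (u0 : ℤ → Fin m → ℝ)
    (hu0 : ∀ t : ℤ, u0 t = -(K.mulVec (x t)) - W⁻¹.mulVec (g t)) :
    Summable (fun t : ℤ =>
        x t ⬝ᵥ Q.mulVec (x t) + 2 * (x t ⬝ᵥ S.mulVec (u t)) + u t ⬝ᵥ R.mulVec (u t)) ∧
    Summable (fun t : ℤ => (u t - u0 t) ⬝ᵥ W.mulVec (u t - u0 t)) ∧
    Summable (fun t : ℤ =>
        -(g t ⬝ᵥ W⁻¹.mulVec (g t)) + d t ⬝ᵥ (B_dᵀ * X * B_d).mulVec (d t) +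
          2 * (v (t + 1) ⬝ᵥ B_d.mulVec (d t))) ∧
    (∑' t : ℤ,
        (x t ⬝ᵥ Q.mulVec (x t) + 2 * (x t ⬝ᵥ S.mulVec (u t)) + u t ⬝ᵥ R.mulVec (u t))) =
      (∑' t : ℤ, (u t - u0 t) ⬝ᵥ W.mulVec (u t - u0 t)) +
      (∑' t : ℤ,
        (-(g t ⬝ᵥ W⁻¹.mulVec (g t)) + d t ⬝ᵥ (B_dᵀ * X * B_d).mulVec (d t) +
          2 * (v (t + 1) ⬝ᵥ B_d.mulVec (d t)))) := by
  classical
  -- basic matrix facts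
  have hXs : Xᵀ = X := hXsymm
  have hWs : Wᵀ = W := by
    rw [hWdef]
    simp only [Matrix.transpose_add, Matrix.transpose_mul, Matrix.transpose_transpose,
      hRsymm.eq, hXsymm.eq, Matrix.mul_assoc]
  have hdet : IsUnit W.det := (Matrix.isUnit_iff_isUnit_det W).mp hW
  have hWV : W * W⁻¹ = 1 := Matrix.mul_nonsing_inv W hdet
  have hVW : W⁻¹ * W = 1 := Matrix.nonsing_inv_mul W hdet
  have hVs : W⁻¹ᵀ = W⁻¹ := by rw [Matrix.transpose_nonsing_inv, hWs]
  have hKW : W * K = Bᵀ * X * A + Sᵀ := by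
    rw [hKdef, ← Matrix.mul_assoc, hWV, Matrix.one_mul]
  have hKt : Kᵀ = (Aᵀ * X * B + S) * W⁻¹ := by
    rw [hKdef]
    simp only [Matrix.transpose_mul, Matrix.transpose_add, Matrix.transpose_transpose,
      hXs, hVs]
    rw [← Matrix.mul_assoc]
  have hKWK : Kᵀ * W * K = (Aᵀ * X * B + S) * W⁻¹ * (Aᵀ * X * B + S)ᵀ := by
    have hPt : (Aᵀ * X * B + S)ᵀ = Bᵀ * X * A + Sᵀ := by
      simp only [Matrix.transpose_add, Matrix.transpose_mul, Matrix.transpose_transpose, hXs,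
        Matrix.mul_assoc]
    rw [hPt, hKt, hKdef, Matrix.mul_assoc ((Aᵀ * X * B + S) * W⁻¹) W, ← Matrix.mul_assoc W,
      hWV, Matrix.one_mul]
  have hDARE' : Kᵀ * W * K = Q + Aᵀ * X * A - X := by
    rw [hKWK]
    have e1 : X + (Aᵀ * X * B + S) * W⁻¹ * (Aᵀ * X * B + S)ᵀ = Aᵀ * X * A + Q :=
      eq_sub_iff_add_eq.mp hDARE
    have e2 : Q + Aᵀ * X * A = X + (Aᵀ * X * B + S) * W⁻¹ * (Aᵀ * X * B + S)ᵀ := by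
      rw [e1, add_comm]
    rw [e2]; abel
  -- the completed-square cost-difference function
  set φ : ℤ → ℝ := fun t => x t ⬝ᵥ X.mulVec (x t) + 2 * (v t ⬝ᵥ x t) with hφ
  -- pointwise completion-of-squares identity
  have key : ∀ t : ℤ,
      x t ⬝ᵥ Q.mulVec (x t) + 2 * (x t ⬝ᵥ S.mulVec (u t)) + u t ⬝ᵥ R.mulVec (u t)
        = (u t - u0 t) ⬝ᵥ W.mulVec (u t - u0 t)
          + (-(g t ⬝ᵥ W⁻¹.mulVec (g t)) + d t ⬝ᵥ (B_dᵀ * X * B_d).mulVec (d t) +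
              2 * (v (t + 1) ⬝ᵥ B_d.mulVec (d t)))
          + (φ t - φ (t + 1)) := by
    intro t
    have h := key_identity A B Q S R X W K B_d hXs hWs hVs hWV hVW hWdef hKW hDARE'
      (x t) (v (t + 1)) (u t) (d t)
    rw [hφ]
    simp only []
    rw [hu0 t, hg t, hadj t, hdyn t]
    convert h using 2 <;> ring
  -- summability of the three families
  have hv1 : MemL2 (fun t => v (t + 1)) := MemL2.shift hv
  have hgL2 : MemL2 g := by
    have h := MemL2.add' (MemL2.matmul Bᵀ hv1) (MemL2.matmul (Bᵀ * X * B_d) hd)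
    have h' : Summable (fun t => (Bᵀ.mulVec (v (t+1)) + (Bᵀ * X * B_d).mulVec (d t)) ⬝ᵥ
        (Bᵀ.mulVec (v (t+1)) + (Bᵀ * X * B_d).mulVec (d t))) := h
    exact h'.congr fun t => by rw [← hg t]
  have hwL2 : MemL2 (fun t => u t - u0 t) := by
    have h := MemL2.add' hu (MemL2.add' (MemL2.matmul K hx) (MemL2.matmul W⁻¹ hgL2))
    have h' : Summable (fun t => (u t + (K.mulVec (x t) + W⁻¹.mulVec (g t))) ⬝ᵥ
        (u t + (K.mulVec (x t) + W⁻¹.mulVec (g t)))) := h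
    refine h'.congr fun t => ?_
    show _ = (u t - u0 t) ⬝ᵥ (u t - u0 t)
    rw [hu0 t]
    congr 1 <;> abel
  have S1 : Summable (fun t : ℤ =>
      x t ⬝ᵥ Q.mulVec (x t) + 2 * (x t ⬝ᵥ S.mulVec (u t)) + u t ⬝ᵥ R.mulVec (u t)) :=
    ((bilin_summable Q hx hx).add ((bilin_summable S hx hu).mul_left 2)).add
      (bilin_summable R hu hu)
  have S2 : Summable (fun t : ℤ => (u t - u0 t) ⬝ᵥ W.mulVec (u t - u0 t)) :=
    bilin_summable W hwL2 hwL2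
  have S3 : Summable (fun t : ℤ =>
      -(g t ⬝ᵥ W⁻¹.mulVec (g t)) + d t ⬝ᵥ (B_dᵀ * X * B_d).mulVec (d t) +
        2 * (v (t + 1) ⬝ᵥ B_d.mulVec (d t))) :=
    (((bilin_summable W⁻¹ hgL2 hgL2).neg.add (bilin_summable (B_dᵀ * X * B_d) hd hd)).add
      ((bilin_summable B_d hv1 hd).mul_left 2))
  refine ⟨S1, S2, S3, ?_⟩
  -- telescoping
  have Sφ : Summable (fun t : ℤ => φ t - φ (t + 1)) := by
    refine ((S1.sub S2).sub S3).congr fun t => ?_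
    have := key t; linarith
  have hφ_sum : Summable φ :=
    (bilin_summable X hx hx).add ((dot_summable hv hx).mul_left 2)
  have hφ0 : Filter.Tendsto φ Filter.cofinite (nhds 0) := hφ_sum.tendsto_cofinite_zero
  have hneg : Filter.Tendsto (fun N : ℕ => -(N:ℤ)) Filter.atTop Filter.cofinite := by
    rw [← Nat.cofinite_eq_atTop]
    exact Function.Injective.tendsto_cofinite (fun a b h => by omega)
  have hpos : Filter.Tendsto (fun N : ℕ => (N:ℤ) + 1) Filter.atTop Filter.cofinite := by
    rw [← Nat.cofinite_eq_atTop]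
    exact Function.Injective.tendsto_cofinite (fun a b h => by omega)
  have hIcc : Filter.Tendsto (fun N : ℕ => Finset.Icc (-(N:ℤ)) N) Filter.atTop Filter.atTop := by
    refine Filter.tendsto_atTop_finset_of_monotone (fun N M h => ?_) (fun t => ?_)
    · exact Finset.Icc_subset_Icc (by omega) (by exact_mod_cast Int.ofNat_le.mpr h)
    · exact ⟨t.natAbs, by rw [Finset.mem_Icc]; omega⟩
  have hpart : Filter.Tendsto (fun N : ℕ => ∑ t ∈ Finset.Icc (-(N:ℤ)) N, (φ t - φ (t + 1)))
      Filter.atTop (nhds (∑' t : ℤ, (φ t - φ (t + 1)))) :=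
    (Sφ.hasSum).comp hIcc
  have hpart0 : Filter.Tendsto (fun N : ℕ => ∑ t ∈ Finset.Icc (-(N:ℤ)) N, (φ t - φ (t + 1)))
      Filter.atTop (nhds 0) := by
    have heq : (fun N : ℕ => ∑ t ∈ Finset.Icc (-(N:ℤ)) N, (φ t - φ (t + 1)))
        = fun N : ℕ => φ (-(N:ℤ)) - φ ((N:ℤ) + 1) := funext fun N => tele φ N
    rw [heq]
    have := (hφ0.comp hneg).sub (hφ0.comp hpos)
    simpa using this
  have hzero : (∑' t : ℤ, (φ t - φ (t + 1))) = 0 := tendsto_nhds_unique hpart hpart0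
  have hsplit : (∑' t : ℤ, (φ t - φ (t + 1)))
      = (∑' t : ℤ, (x t ⬝ᵥ Q.mulVec (x t) + 2 * (x t ⬝ᵥ S.mulVec (u t)) + u t ⬝ᵥ R.mulVec (u t)))
        - (∑' t : ℤ, (u t - u0 t) ⬝ᵥ W.mulVec (u t - u0 t))
        - (∑' t : ℤ, (-(g t ⬝ᵥ W⁻¹.mulVec (g t)) + d t ⬝ᵥ (B_dᵀ * X * B_d).mulVec (d t) +
            2 * (v (t + 1) ⬝ᵥ B_d.mulVec (d t)))) := by
    rw [← Summable.tsum_sub S1 S2, ← Summable.tsum_sub (S1.sub S2) S3]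
    exact tsum_congr fun t => by have := key t; linarith
  linarith [hzero, hsplit]
end

section
/- Let C ∈ ℝ^{q×n}, D ∈ ℝ^{q×m} and set Q := CᵀC, S := CᵀD, R := DᵀD. Let X ∈ ℝ^{n×n} be a symmetric positive semidefinite solution of the DARE with W := R + BᵀXB invertible, let K := W⁻¹(BᵀXA + Sᵀ), and let B_d ∈ ℝ^{n×k}. Let d : ℤ → ℝᵏ be in ℓ2 and let v : ℤ → ℝⁿ be in ℓ2 with v_t = (A − BK)ᵀ(v_{t+1} + X B_d d_t) for all t. Suppose (x, u) and (x̄, ū) are two trajectories with x, x̄ : ℤ → ℝⁿ and u, ū : ℤ → ℝᵐ all in ℓ2, both satisfying the dynamics x_{t+1} = A x_t + B u_t + B_d d_t (resp. x̄_{t+1} = A x̄_t + B ū_t + B_d d_t) for all t, and suppose ū is given by the non-causal control law ū_t = −K x̄_t − W⁻¹ Bᵀ v_{t+1} − W⁻¹ BᵀX B_d d_t for all t. Then ∑_{t∈ℤ} ‖C x̄_t + D ū_t‖² ≤ ∑_{t∈ℤ} ‖C x_t + D u_t‖². -/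
open Matrix

/-!
Write `z = C x + D u` and `z̄ = C x̄ + D ū`. Since the cost is a sum of squares,
`‖z‖² = ‖z̄‖² + 2 ⟨z̄, z - z̄⟩ + ‖z - z̄‖²`, so it suffices that the cross term vanishes.
The difference `(x - x̄, u - ū)` is a trajectory of the undisturbed system, and
`λ_t := X x̄_t + v_t` is a costate for `(x̄, ū)`: by the DARE and the control law,
`λ_t = Q x̄_t + S ū_t + Aᵀ λ_{t+1}` and `Sᵀ x̄_t + R ū_t + Bᵀ λ_{t+1} = 0`.
Hence `⟨z̄_t, z_t - z̄_t⟩ = ⟨λ_t, x_t - x̄_t⟩ - ⟨λ_{t+1}, x_{t+1} - x̄_{t+1}⟩`,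
which telescopes to `0` over `ℤ` because `λ` and `x - x̄` are in ℓ2.
-/

theorem dotProduct_self_nonneg {ι : Type*} [Fintype ι] (x : ι → ℝ) : 0 ≤ x ⬝ᵥ x :=
  Fintype.sum_nonneg fun i => mul_self_nonneg (x i)

theorem two_mul_abs_dotProduct_le {ι : Type*} [Fintype ι] (x y : ι → ℝ) :
    2 * |x ⬝ᵥ y| ≤ x ⬝ᵥ x + y ⬝ᵥ y := by
  have h₁ := dotProduct_self_nonneg (x + y)
  have h₂ := dotProduct_self_nonneg (x - y)
  simp only [add_dotProduct, dotProduct_add, sub_dotProduct, dotProduct_sub,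
    dotProduct_comm y x] at h₁ h₂
  cases abs_cases (x ⬝ᵥ y) <;> linarith

theorem tsum_sub_comp_add_one_eq_zero {α : Type*} [AddCommGroup α] [TopologicalSpace α]
    [IsTopologicalAddGroup α] [T2Space α] {f : ℤ → α} (hf : Summable f) :
    ∑' t, (f t - f (t + 1)) = 0 := by
  have hshift : Summable fun t => f (t + 1) := (Equiv.addRight 1).summable_iff.2 hf
  rw [hf.tsum_sub hshift]
  exact sub_eq_zero.2 ((Equiv.addRight 1).tsum_eq f).symm

namespace MemL2

variable {p : ℕ} {x y : ℤ → Fin p → ℝ}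

theorem summable_dotProduct (hx : MemL2 x) (hy : MemL2 y) :
    Summable fun t => x t ⬝ᵥ y t :=
  .of_norm_bounded ((Summable.add hx hy).div_const 2) fun t => by
    rw [Real.norm_eq_abs]; linarith [two_mul_abs_dotProduct_le (x t) (y t)]

theorem add (hx : MemL2 x) (hy : MemL2 y) : MemL2 fun t => x t + y t :=
  ((Summable.add hx ((hx.summable_dotProduct hy).mul_left 2)).add hy).congr fun t => by
    simp only [add_dotProduct, dotProduct_add, dotProduct_comm (y t) (x t)]
    ring

theorem sub (hx : MemL2 x) (hy : MemL2 y) : MemL2 fun t => x t - y t := by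
  have hy' : MemL2 fun t => -y t := by simpa [MemL2] using hy
  simpa [sub_eq_add_neg] using hx.add hy'

theorem mulVec {r : ℕ} (M : Matrix (Fin r) (Fin p) ℝ) (hx : MemL2 x) :
    MemL2 fun t => M *ᵥ x t := by
  refine .of_nonneg_of_le (fun t => dotProduct_self_nonneg _) (fun t => ?_)
    (hx.mul_left (∑ i, M i ⬝ᵥ M i))
  rw [Finset.sum_mul]
  refine Finset.sum_le_sum fun i _ => ?_
  simpa [Matrix.mulVec, dotProduct, sq] using
    Finset.sum_mul_sq_le_sq_mul_sq Finset.univ (M i) (x t)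

theorem tsum_dotProduct_self_le_of_tsum_dotProduct_sub_eq_zero (hx : MemL2 x) (hy : MemL2 y)
    (horth : ∑' t, x t ⬝ᵥ (y t - x t) = 0) :
    ∑' t, x t ⬝ᵥ x t ≤ ∑' t, y t ⬝ᵥ y t := by
  have hyx := hy.sub hx
  have hcross := hx.summable_dotProduct hyx
  calc ∑' t, x t ⬝ᵥ x t
      ≤ ∑' t, x t ⬝ᵥ x t + 2 * ∑' t, x t ⬝ᵥ (y t - x t)
          + ∑' t, (y t - x t) ⬝ᵥ (y t - x t) := by
        have : 0 ≤ ∑' t, (y t - x t) ⬝ᵥ (y t - x t) :=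
          tsum_nonneg fun t => dotProduct_self_nonneg _
        rw [horth]; linarith
    _ = ∑' t, y t ⬝ᵥ y t := by
        rw [← tsum_mul_left, ← Summable.tsum_add hx (hcross.mul_left 2),
          ← (Summable.add hx (hcross.mul_left 2)).tsum_add hyx]
        refine tsum_congr fun t => ?_
        simp only [sub_dotProduct, dotProduct_sub, dotProduct_comm (y t) (x t)]
        ring

end MemL2

section Costate

variable {ι μ κ 𝕜 : Type*} [Fintype ι] [Fintype μ] [Fintype κ] [CommRing 𝕜]
  {A X Q : Matrix ι ι 𝕜} {B S : Matrix ι μ 𝕜} {R W : Matrix μ μ 𝕜} {K : Matrix μ ι 𝕜}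
  {a w p : ι → 𝕜} {b : μ → 𝕜}

theorem dotProduct_eq_sub_of_costate {C : Matrix κ ι 𝕜} {D : Matrix κ μ 𝕜} {l l' : ι → 𝕜}
    (hQ : Q = Cᵀ * C) (hS : S = Cᵀ * D) (hR : R = Dᵀ * D)
    (hcostate : Q *ᵥ a + S *ᵥ b + Aᵀ *ᵥ l' = l) (hstat : Sᵀ *ᵥ a + R *ᵥ b + Bᵀ *ᵥ l' = 0)
    (a' : ι → 𝕜) (b' : μ → 𝕜) :
    (C *ᵥ a + D *ᵥ b) ⬝ᵥ (C *ᵥ a' + D *ᵥ b') = l ⬝ᵥ a' - l' ⬝ᵥ (A *ᵥ a' + B *ᵥ b') := by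
  subst hQ hS hR hcostate
  simp only [transpose_mul, transpose_transpose, ← mulVec_mulVec, ← mulVec_add] at hstat ⊢
  set z := C *ᵥ a + D *ᵥ b
  simp only [dotProduct_add, dotProduct_mulVec, ← mulVec_transpose,
    eq_neg_of_add_eq_zero_left hstat, add_dotProduct, neg_dotProduct]
  ring

variable [DecidableEq μ]

theorem noncausal_law_stationarity (hW : W = R + Bᵀ * X * B) (hWinv : W * W⁻¹ = 1)
    (hK : K = W⁻¹ * (Bᵀ * X * A + Sᵀ))
    (hb : b = -(K *ᵥ a) - W⁻¹ *ᵥ (Bᵀ *ᵥ (p + X *ᵥ w))) :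
    Sᵀ *ᵥ a + R *ᵥ b + Bᵀ *ᵥ (X *ᵥ (A *ᵥ a + B *ᵥ b + w) + p) = 0 := by
  have hWb : W *ᵥ b = -((Bᵀ * X * A + Sᵀ) *ᵥ a) - Bᵀ *ᵥ (p + X *ᵥ w) := by
    simp only [hb, hK, mulVec_sub, mulVec_neg, mulVec_mulVec, ← Matrix.mul_assoc, hWinv,
      Matrix.one_mul]
  calc Sᵀ *ᵥ a + R *ᵥ b + Bᵀ *ᵥ (X *ᵥ (A *ᵥ a + B *ᵥ b + w) + p)
      = (Bᵀ * X * A + Sᵀ) *ᵥ a + W *ᵥ b + Bᵀ *ᵥ (p + X *ᵥ w) := by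
        simp only [hW, add_mulVec, mulVec_add, mulVec_mulVec, Matrix.mul_assoc]; abel
    _ = 0 := by rw [hWb]; abel

theorem noncausal_law_costate_recursion (hX : X.IsSymm) (hWsymm : W.IsSymm)
    (hDARE : X = Aᵀ * X * A + Q - (Aᵀ * X * B + S) * W⁻¹ * (Aᵀ * X * B + S)ᵀ)
    (hK : K = W⁻¹ * (Bᵀ * X * A + Sᵀ))
    (hb : b = -(K *ᵥ a) - W⁻¹ *ᵥ (Bᵀ *ᵥ (p + X *ᵥ w))) :
    Q *ᵥ a + S *ᵥ b + Aᵀ *ᵥ (X *ᵥ (A *ᵥ a + B *ᵥ b + w) + p)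
      = X *ᵥ a + (A - B * K)ᵀ *ᵥ (p + X *ᵥ w) := by
  set G := Aᵀ * X * B + S
  have hK' : K = W⁻¹ * Gᵀ := by
    rw [hK]; simp [G, transpose_add, transpose_mul, hX.eq, Matrix.mul_assoc]
  have hKt : Kᵀ = G * W⁻¹ := by
    rw [hK', transpose_mul, transpose_transpose, transpose_nonsing_inv, hWsymm.eq]
  have hGb : G *ᵥ b = -((G * W⁻¹ * Gᵀ) *ᵥ a) - (G * W⁻¹ * Bᵀ) *ᵥ (p + X *ᵥ w) := by
    rw [hb, hK']; simp only [mulVec_sub, mulVec_neg, mulVec_mulVec, Matrix.mul_assoc]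
  calc Q *ᵥ a + S *ᵥ b + Aᵀ *ᵥ (X *ᵥ (A *ᵥ a + B *ᵥ b + w) + p)
      = (Aᵀ * X * A + Q) *ᵥ a + G *ᵥ b + Aᵀ *ᵥ (p + X *ᵥ w) := by
        simp only [G, add_mulVec, mulVec_add, mulVec_mulVec, Matrix.mul_assoc]; abel
    _ = (Aᵀ * X * A + Q - G * W⁻¹ * Gᵀ) *ᵥ a + (A - B * K)ᵀ *ᵥ (p + X *ᵥ w) := by
        rw [hGb, transpose_sub, transpose_mul, hKt]; simp only [sub_mulVec]; abel
    _ = X *ᵥ a + (A - B * K)ᵀ *ᵥ (p + X *ᵥ w) := by rw [← hDARE]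

end Costate

theorem noncausal_controller_optimal_general {n m k q : ℕ}
    (A : Matrix (Fin n) (Fin n) ℝ) (B : Matrix (Fin n) (Fin m) ℝ)
    (C : Matrix (Fin q) (Fin n) ℝ) (D : Matrix (Fin q) (Fin m) ℝ)
    (Q : Matrix (Fin n) (Fin n) ℝ) (S : Matrix (Fin n) (Fin m) ℝ)
    (R : Matrix (Fin m) (Fin m) ℝ)
    (hQdef : Q = Cᵀ * C) (hSdef : S = Cᵀ * D) (hRdef : R = Dᵀ * D)
    (X : Matrix (Fin n) (Fin n) ℝ) (hXsymm : X.IsSymm)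
    (W : Matrix (Fin m) (Fin m) ℝ) (hWdef : W = R + Bᵀ * X * B) (hW : IsUnit W)
    (hDARE : X = Aᵀ * X * A + Q - (Aᵀ * X * B + S) * W⁻¹ * (Aᵀ * X * B + S)ᵀ)
    (K : Matrix (Fin m) (Fin n) ℝ) (hKdef : K = W⁻¹ * (Bᵀ * X * A + Sᵀ))
    (B_d : Matrix (Fin n) (Fin k) ℝ)
    (d : ℤ → Fin k → ℝ)
    (v : ℤ → Fin n → ℝ) (hv : MemL2 v)
    (hadj : ∀ t : ℤ, v t = (A - B * K)ᵀ.mulVec (v (t + 1) + (X * B_d).mulVec (d t)))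
    (x xbar : ℤ → Fin n → ℝ) (u ubar : ℤ → Fin m → ℝ)
    (hx : MemL2 x) (hxbar : MemL2 xbar) (hu : MemL2 u) (hubar : MemL2 ubar)
    (hdyn : ∀ t : ℤ, x (t + 1) = A.mulVec (x t) + B.mulVec (u t) + B_d.mulVec (d t))
    (hdynbar : ∀ t : ℤ,
      xbar (t + 1) = A.mulVec (xbar t) + B.mulVec (ubar t) + B_d.mulVec (d t))
    (hlaw : ∀ t : ℤ,
      ubar t = -(K.mulVec (xbar t)) - W⁻¹.mulVec (Bᵀ.mulVec (v (t + 1))) -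
        W⁻¹.mulVec ((Bᵀ * X * B_d).mulVec (d t))) :
    (∑' t : ℤ, (C.mulVec (xbar t) + D.mulVec (ubar t)) ⬝ᵥ
        (C.mulVec (xbar t) + D.mulVec (ubar t))) ≤
      (∑' t : ℤ, (C.mulVec (x t) + D.mulVec (u t)) ⬝ᵥ
        (C.mulVec (x t) + D.mulVec (u t))) := by
  have hWsymm : W.IsSymm := by
    simp [hWdef, hRdef, IsSymm, transpose_mul, hXsymm.eq, Matrix.mul_assoc]
  have hWinv : W * W⁻¹ = 1 := mul_nonsing_inv W ((isUnit_iff_isUnit_det W).1 hW)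
  have hlaw' : ∀ t,
      ubar t = -(K *ᵥ xbar t) - W⁻¹ *ᵥ (Bᵀ *ᵥ (v (t + 1) + X *ᵥ (B_d *ᵥ d t))) := fun t => by
    simp only [hlaw t, mulVec_add, mulVec_mulVec, Matrix.mul_assoc, sub_sub]
  have hadj' : ∀ t, v t = (A - B * K)ᵀ *ᵥ (v (t + 1) + X *ᵥ (B_d *ᵥ d t)) := fun t => by
    rw [hadj t, mulVec_mulVec]
  set costate : ℤ → Fin n → ℝ := fun t => X *ᵥ xbar t + v t
  have hcross : ∀ t, (C *ᵥ xbar t + D *ᵥ ubar t) ⬝ᵥ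
        (C *ᵥ x t + D *ᵥ u t - (C *ᵥ xbar t + D *ᵥ ubar t))
      = costate t ⬝ᵥ (x t - xbar t) - costate (t + 1) ⬝ᵥ (x (t + 1) - xbar (t + 1)) := by
    intro t
    have hδz : C *ᵥ x t + D *ᵥ u t - (C *ᵥ xbar t + D *ᵥ ubar t)
        = C *ᵥ (x t - xbar t) + D *ᵥ (u t - ubar t) := by
      simp only [mulVec_sub]; abel
    have hδx : x (t + 1) - xbar (t + 1) = A *ᵥ (x t - xbar t) + B *ᵥ (u t - ubar t) := by
      simp only [hdyn, hdynbar, mulVec_sub]; abel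
    rw [hδz, hδx]
    refine dotProduct_eq_sub_of_costate hQdef hSdef hRdef ?_ ?_ _ _ <;>
      simp only [costate, hdynbar t]
    · rw [noncausal_law_costate_recursion hXsymm hWsymm hDARE hKdef (hlaw' t), ← hadj']
    · exact noncausal_law_stationarity hWdef hWinv hKdef (hlaw' t)
  refine MemL2.tsum_dotProduct_self_le_of_tsum_dotProduct_sub_eq_zero
    ((hxbar.mulVec C).add (hubar.mulVec D)) ((hx.mulVec C).add (hu.mulVec D)) ?_
  simp_rw [hcross]
  exact tsum_sub_comp_add_one_eq_zero
    (((hxbar.mulVec X).add hv).summable_dotProduct (hx.sub hxbar))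

/-- Optimality of the non-causal control law. With `Q = CᵀC`, `S = CᵀD`,
`R = DᵀD`, a symmetric PSD DARE solution `X`, gain `K = W⁻¹(BᵀXA + Sᵀ)`, an ℓ2 adjoint
sequence `v`, and two ℓ2 trajectories `(x,u)` and `(x̄,ū)` of the same dynamics where
`ū_t = -K x̄_t - W⁻¹ Bᵀ v_{t+1} - W⁻¹ BᵀX B_d d_t`, the cost of `(x̄,ū)` is no larger
than that of `(x,u)`. -/
theorem noncausal_controller_optimal {n m k q : ℕ}
    (A : Matrix (Fin n) (Fin n) ℝ) (B : Matrix (Fin n) (Fin m) ℝ)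
    (C : Matrix (Fin q) (Fin n) ℝ) (D : Matrix (Fin q) (Fin m) ℝ)
    (Q : Matrix (Fin n) (Fin n) ℝ) (S : Matrix (Fin n) (Fin m) ℝ)
    (R : Matrix (Fin m) (Fin m) ℝ)
    (hQdef : Q = Cᵀ * C) (hSdef : S = Cᵀ * D) (hRdef : R = Dᵀ * D)
    (X : Matrix (Fin n) (Fin n) ℝ) (hXsymm : X.IsSymm) (hXpsd : X.PosSemidef)
    (W : Matrix (Fin m) (Fin m) ℝ) (hWdef : W = R + Bᵀ * X * B) (hW : IsUnit W)
    (hDARE : X = Aᵀ * X * A + Q - (Aᵀ * X * B + S) * W⁻¹ * (Aᵀ * X * B + S)ᵀ)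
    (K : Matrix (Fin m) (Fin n) ℝ) (hKdef : K = W⁻¹ * (Bᵀ * X * A + Sᵀ))
    (B_d : Matrix (Fin n) (Fin k) ℝ)
    (d : ℤ → Fin k → ℝ) (hd : MemL2 d)
    (v : ℤ → Fin n → ℝ) (hv : MemL2 v)
    (hadj : ∀ t : ℤ, v t = (A - B * K)ᵀ.mulVec (v (t + 1) + (X * B_d).mulVec (d t)))
    (x xbar : ℤ → Fin n → ℝ) (u ubar : ℤ → Fin m → ℝ)
    (hx : MemL2 x) (hxbar : MemL2 xbar) (hu : MemL2 u) (hubar : MemL2 ubar)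
    (hdyn : ∀ t : ℤ, x (t + 1) = A.mulVec (x t) + B.mulVec (u t) + B_d.mulVec (d t))
    (hdynbar : ∀ t : ℤ,
      xbar (t + 1) = A.mulVec (xbar t) + B.mulVec (ubar t) + B_d.mulVec (d t))
    (hlaw : ∀ t : ℤ,
      ubar t = -(K.mulVec (xbar t)) - W⁻¹.mulVec (Bᵀ.mulVec (v (t + 1))) -
        W⁻¹.mulVec ((Bᵀ * X * B_d).mulVec (d t))) :
    (∑' t : ℤ, (C.mulVec (xbar t) + D.mulVec (ubar t)) ⬝ᵥ
        (C.mulVec (xbar t) + D.mulVec (ubar t))) ≤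
      (∑' t : ℤ, (C.mulVec (x t) + D.mulVec (u t)) ⬝ᵥ
        (C.mulVec (x t) + D.mulVec (u t))) :=
  noncausal_controller_optimal_general A B C D Q S R hQdef hSdef hRdef X hXsymm W hWdef hW hDARE K
    hKdef B_d d v hv hadj x xbar u ubar hx hxbar hu hubar hdyn hdynbar hlaw
end

section
/- Let M ∈ ℝ^{n×n} have spectral radius strictly less than 1, let N ∈ ℝ^{n×k}, and let d : ℤ → ℝᵏ be in ℓ2. Then for every t ∈ ℤ the series v_t := ∑_{s=t}^{∞} (Mᵀ)^{s−t+1} N d_s converges absolutely, the resulting sequence v : ℤ → ℝⁿ is in ℓ2, and v satisfies the backward recursion v_t = Mᵀ(v_{t+1} + N d_t) for all t ∈ ℤ. -/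
/-!
Gelfand's formula turns `ρ(M) < 1` into summability of `‖Mʲ‖`, so the coefficient matrices
`(Mᵀ)^(j+1) N` have summable norms `a_j`. The ℓ2 bound is Young's inequality `ℓ¹ ⋆ ℓ² ⊆ ℓ²`:
by the weighted Cauchy–Schwarz inequality `(∑ⱼ a_j e_{t+j})² ≤ (∑ⱼ a_j) (∑ⱼ a_j e_{t+j}²)`,
and the right-hand side is summable over `t` by Tonelli. The backward recursion is obtained by
splitting off the term `j = 0`.
-/

open Matrix

/-- Euclidean norm of a vector in `ℝ^p`. -/
noncomputable def eNorm {p : ℕ} (x : Fin p → ℝ) : ℝ :=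
  Real.sqrt (x ⬝ᵥ x)

open Filter
open scoped Matrix.Norms.Frobenius

theorem summable_norm_pow_of_spectralRadius_lt_one {A : Type*} [NormedRing A]
    [NormedAlgebra ℂ A] [CompleteSpace A] {a : A} (ha : spectralRadius ℂ a < 1) :
    Summable fun j : ℕ => ‖a ^ j‖ := by
  obtain ⟨r, hρr, hr1⟩ := ENNReal.lt_iff_exists_nnreal_btwn.mp ha
  refine Summable.of_norm_bounded_eventually_nat
    (summable_geometric_of_lt_one r.coe_nonneg (by exact_mod_cast hr1)) ?_
  filter_upwards [(spectrum.pow_nnnorm_pow_one_div_tendsto_nhds_spectralRadius a).eventually_lt_const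
    hρr, eventually_gt_atTop 0] with j hj hj0
  rw [one_div, ENNReal.rpow_inv_lt_iff (by exact_mod_cast hj0), ENNReal.rpow_natCast,
    ← ENNReal.coe_pow, ENNReal.coe_lt_coe] at hj
  rw [norm_norm]
  exact_mod_cast hj.le

theorem Matrix.summable_frobenius_norm_pow {m : Type*} [Fintype m] [DecidableEq m]
    {M : Matrix m m ℝ} (hM : spectralRadius ℂ (M.map Complex.ofReal) < 1) :
    Summable fun j : ℕ => ‖M ^ j‖ := by
  refine (summable_norm_pow_of_spectralRadius_lt_one hM).congr fun j => ?_
  have hmap : M.map Complex.ofReal ^ j = (M ^ j).map Complex.ofReal :=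
    (map_pow Complex.ofRealHom.mapMatrix M j).symm
  rw [hmap, frobenius_norm_map_eq _ _ Complex.norm_real]

theorem summable_of_sq_le_mul {ι : Type*} {r f g : ι → ℝ} (hf : Summable f) (hg : Summable g)
    (hf0 : ∀ i, 0 ≤ f i) (hg0 : ∀ i, 0 ≤ g i) (h : ∀ i, r i ^ 2 ≤ f i * g i) : Summable r := by
  refine Summable.of_norm_bounded ((hf.add hg).div_const 2) fun i => ?_
  rw [Real.norm_eq_abs]
  refine abs_le_of_sq_le_sq ?_ (by linarith [hf0 i, hg0 i])
  nlinarith [h i, sq_nonneg (f i - g i)]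

theorem tsum_sq_le_tsum_mul_tsum_of_sq_le_mul {ι : Type*} {r f g : ι → ℝ} (hf : Summable f)
    (hg : Summable g) (hf0 : ∀ i, 0 ≤ f i) (hg0 : ∀ i, 0 ≤ g i) (h : ∀ i, r i ^ 2 ≤ f i * g i) :
    (∑' i, r i) ^ 2 ≤ (∑' i, f i) * ∑' i, g i :=
  le_of_tendsto_of_tendsto' ((summable_of_sq_le_mul hf hg hf0 hg0 h).hasSum.pow 2)
    (Tendsto.mul hf.hasSum hg.hasSum) fun s =>
      Finset.sum_sq_le_sum_mul_sum_of_sq_le_mul s (fun i _ => hf0 i) (fun i _ => hg0 i)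
        fun i _ => h i

section WeightedShift

variable {a : ℕ → ℝ} {e : ℤ → ℝ}

theorem summable_mul_sq_shift (ha0 : ∀ j, 0 ≤ a j) (ha : Summable a)
    (he : Summable fun s => e s ^ 2) :
    Summable fun p : ℤ × ℕ => a p.2 * e (p.1 + p.2) ^ 2 := by
  have hswap : Summable fun q : ℕ × ℤ => a q.1 * e (q.2 + q.1) ^ 2 := by
    refine (summable_prod_of_nonneg fun q => mul_nonneg (ha0 _) (sq_nonneg _)).mpr
      ⟨fun j => (he.comp_injective (add_left_injective (j : ℤ))).mul_left (a j), ?_⟩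
    refine (ha.mul_right (∑' s, e s ^ 2)).congr fun j => ?_
    dsimp only
    rw [tsum_mul_left]
    exact congrArg _ ((Equiv.addRight (j : ℤ)).tsum_eq fun s => e s ^ 2).symm
  exact hswap.prod_symm

theorem summable_mul_shift (ha0 : ∀ j, 0 ≤ a j) (ha : Summable a)
    (he : Summable fun s => e s ^ 2) (t : ℤ) : Summable fun j : ℕ => a j * e (t + j) :=
  summable_of_sq_le_mul ha ((summable_mul_sq_shift ha0 ha he).prod_factor t) ha0
    (fun j => mul_nonneg (ha0 j) (sq_nonneg _)) fun j => (by ring : _ = _).le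

theorem summable_sq_tsum_mul_shift (ha0 : ∀ j, 0 ≤ a j) (ha : Summable a)
    (he : Summable fun s => e s ^ 2) :
    Summable fun t : ℤ => (∑' j : ℕ, a j * e (t + j)) ^ 2 := by
  have hF := summable_mul_sq_shift ha0 ha he
  refine Summable.of_nonneg_of_le (fun t => sq_nonneg _) (fun t => ?_)
    (hF.prod.mul_left (∑' j, a j))
  exact tsum_sq_le_tsum_mul_tsum_of_sq_le_mul ha (hF.prod_factor t) ha0
    (fun j => mul_nonneg (ha0 j) (sq_nonneg _)) fun j => (by ring : _ = _).le

end WeightedShift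

section EuclideanNorm

variable {p : ℕ}

theorem eNorm_eq_norm_toLp (x : Fin p → ℝ) : eNorm x = ‖WithLp.toLp 2 x‖ := by
  simp [eNorm, EuclideanSpace.norm_eq, dotProduct, sq]

theorem dotProduct_self_eq_eNorm_sq (x : Fin p → ℝ) : x ⬝ᵥ x = eNorm x ^ 2 :=
  (Real.sq_sqrt (Finset.sum_nonneg fun i _ => mul_self_nonneg (x i))).symm

theorem memL2_iff_summable_eNorm_sq {x : ℤ → Fin p → ℝ} :
    MemL2 x ↔ Summable fun t => eNorm (x t) ^ 2 := by
  simp only [MemL2, dotProduct_self_eq_eNorm_sq]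

theorem eNorm_mulVec_le {m : ℕ} (A : Matrix (Fin m) (Fin p) ℝ) (x : Fin p → ℝ) :
    eNorm (A *ᵥ x) ≤ ‖A‖ * eNorm x := by
  simp only [eNorm_eq_norm_toLp, ← frobenius_norm_replicateCol (ι := Unit), replicateCol_mulVec]
  exact frobenius_norm_mul _ _

theorem summable_of_summable_eNorm {ι : Type*} {f : ι → Fin p → ℝ}
    (hf : Summable fun i => eNorm (f i)) : Summable f := by
  simp only [eNorm_eq_norm_toLp] at hf
  exact (EuclideanSpace.equiv (Fin p) ℝ).symm.summable.mp hf.of_norm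

theorem eNorm_tsum_le {ι : Type*} {f : ι → Fin p → ℝ} (hf : Summable fun i => eNorm (f i)) :
    eNorm (∑' i, f i) ≤ ∑' i, eNorm (f i) := by
  simp only [eNorm_eq_norm_toLp] at hf ⊢
  have htoLp : WithLp.toLp 2 (∑' i, f i) = ∑' i, WithLp.toLp 2 (f i) :=
    (EuclideanSpace.equiv (Fin p) ℝ).symm.map_tsum
  exact htoLp ▸ norm_tsum_le_tsum_norm hf

end EuclideanNorm

section MatrixShift

variable {n k : ℕ} {B : ℕ → Matrix (Fin n) (Fin k) ℝ} {d : ℤ → Fin k → ℝ}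

theorem summable_eNorm_mulVec_shift (hB : Summable fun j => ‖B j‖) (hd : MemL2 d) (t : ℤ) :
    Summable fun j : ℕ => eNorm (B j *ᵥ d (t + j)) :=
  Summable.of_nonneg_of_le (fun _ => Real.sqrt_nonneg _) (fun _ => eNorm_mulVec_le _ _)
    (summable_mul_shift (fun _ => norm_nonneg _) hB (memL2_iff_summable_eNorm_sq.mp hd) t)

theorem memL2_tsum_mulVec_shift (hB : Summable fun j => ‖B j‖) (hd : MemL2 d) :
    MemL2 fun t => ∑' j : ℕ, B j *ᵥ d (t + j) := by
  have he := memL2_iff_summable_eNorm_sq.mp hd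
  refine memL2_iff_summable_eNorm_sq.mpr <| Summable.of_nonneg_of_le (fun _ => sq_nonneg _)
    (fun t => pow_le_pow_left₀ (Real.sqrt_nonneg _) ?_ 2)
    (summable_sq_tsum_mul_shift (fun _ => norm_nonneg _) hB he)
  calc eNorm (∑' j : ℕ, B j *ᵥ d (t + j))
      ≤ ∑' j : ℕ, eNorm (B j *ᵥ d (t + j)) := eNorm_tsum_le (summable_eNorm_mulVec_shift hB hd t)
    _ ≤ ∑' j : ℕ, ‖B j‖ * eNorm (d (t + j)) :=
      Summable.tsum_le_tsum (fun j => eNorm_mulVec_le _ _) (summable_eNorm_mulVec_shift hB hd t)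
        (summable_mul_shift (fun _ => norm_nonneg _) hB he t)

end MatrixShift

theorem Matrix.tsum_pow_succ_mulVec {m : Type*} [Fintype m] [DecidableEq m] (A : Matrix m m ℝ)
    {x : ℕ → m → ℝ}
    (hx : Summable fun j => (A ^ (j + 1)) *ᵥ x (j + 1)) :
    ∑' j, (A ^ (j + 1)) *ᵥ x j = A *ᵥ (∑' j, (A ^ (j + 1)) *ᵥ x (j + 1) + x 0) := by
  have hA := (mulVecLin A).toContinuousLinearMap.map_tsum hx
  have hAx : ∀ j, A *ᵥ ((A ^ (j + 1)) *ᵥ x (j + 1)) = (A ^ (j + 1 + 1)) *ᵥ x (j + 1) := fun j => by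
    rw [mulVec_mulVec, ← pow_succ']
  have htail : Summable fun j => (A ^ (j + 1 + 1)) *ᵥ x (j + 1) :=
    ((mulVecLin A).toContinuousLinearMap.summable hx).congr hAx
  simp only [LinearMap.coe_toContinuousLinearMap', mulVecLin_apply, hAx] at hA
  rw [tsum_eq_zero_add' htail, ← hA, mulVec_add, add_comm, zero_add, pow_one]

/-- If `M` has spectral radius `< 1` and `d ∈ ℓ2`, then for every `t` the
series `v_t = ∑_{s=t}^∞ (Mᵀ)^{s-t+1} N d_s` converges absolutely, the resulting sequence
`v` is in ℓ2, and `v_t = Mᵀ (v_{t+1} + N d_t)` for all `t`. -/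
theorem adjoint_series_solution {n k : ℕ}
    (M : Matrix (Fin n) (Fin n) ℝ)
    (hM : spectralRadius ℂ (M.map Complex.ofReal) < 1)
    (N : Matrix (Fin n) (Fin k) ℝ)
    (d : ℤ → Fin k → ℝ) (hd : MemL2 d) :
    (∀ t : ℤ, Summable fun j : ℕ =>
        eNorm (((Mᵀ) ^ (j + 1)).mulVec (N.mulVec (d (t + j))))) ∧
    MemL2 (fun t : ℤ => ∑' j : ℕ, ((Mᵀ) ^ (j + 1)).mulVec (N.mulVec (d (t + j)))) ∧
    (∀ t : ℤ,
      (∑' j : ℕ, ((Mᵀ) ^ (j + 1)).mulVec (N.mulVec (d (t + j)))) =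
        Mᵀ.mulVec
          ((∑' j : ℕ, ((Mᵀ) ^ (j + 1)).mulVec (N.mulVec (d (t + 1 + j)))) +
            N.mulVec (d t))) := by
  have hpow : Summable fun j => ‖(Mᵀ) ^ (j + 1)‖ := by
    simp only [← transpose_pow, frobenius_norm_transpose]
    exact (summable_frobenius_norm_pow hM).comp_injective (add_left_injective 1)
  have hB : Summable fun j => ‖(Mᵀ) ^ (j + 1) * N‖ :=
    Summable.of_nonneg_of_le (fun _ => norm_nonneg _) (fun _ => frobenius_norm_mul _ _)
      (hpow.mul_right ‖N‖)
  have hsum : ∀ t : ℤ, Summable fun j : ℕ =>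
      eNorm (((Mᵀ) ^ (j + 1)).mulVec (N.mulVec (d (t + j)))) := by
    intro t
    simp only [mulVec_mulVec]
    exact summable_eNorm_mulVec_shift hB hd t
  refine ⟨hsum, ?_, fun t => ?_⟩
  · simp only [mulVec_mulVec]
    exact memL2_tsum_mulVec_shift hB hd
  · have hshift : ∀ j : ℕ, t + ((j + 1 : ℕ) : ℤ) = t + 1 + j := fun j => by push_cast; ring
    have hrec := tsum_pow_succ_mulVec Mᵀ (x := fun j => N *ᵥ d (t + j))
      (by simpa only [hshift] using summable_of_summable_eNorm (hsum (t + 1)))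
    simpa only [hshift, Nat.cast_zero, add_zero] using hrec
end

section
/- Let G and G° be bounded linear operators on H, let F : H ≃ H be a continuous linear equivalence (bounded linear bijection with bounded inverse), and let γ > 0. Suppose the spectral-factorization identity ‖F d‖² = ‖G° d‖² + γ² ‖d‖² holds for every d ∈ H. Then the following are equivalent: (a) for every nonzero d ∈ H, ‖G d‖² − ‖G° d‖² < γ² ‖d‖² (the additive γ-regret bound relative to G°); (b) for every nonzero e ∈ H, ‖G (F⁻¹ e)‖ < ‖e‖ (the strict contraction, i.e. H∞-type, bound on G composed with the inverse spectral factor). -/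
/-- Let `H = ℓ²(ℤ, ℝ^p)` and let `G, G°` be bounded operators on `H`,
`F` a bounded linear bijection of `H` with bounded inverse, and `γ > 0`. If the
spectral-factorization identity `‖F d‖² = ‖G° d‖² + γ² ‖d‖²` holds for all `d`, then
the additive `γ`-regret bound `‖G d‖² - ‖G° d‖² < γ² ‖d‖²` (for nonzero `d`) is
equivalent to the strict contraction bound `‖G (F⁻¹ e)‖ < ‖e‖` (for nonzero `e`). -/
theorem regret_iff_contraction {p : ℕ}
    (G G₀ : lp (fun _ : ℤ => EuclideanSpace ℝ (Fin p)) 2 →L[ℝ]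
      lp (fun _ : ℤ => EuclideanSpace ℝ (Fin p)) 2)
    (F : lp (fun _ : ℤ => EuclideanSpace ℝ (Fin p)) 2 ≃L[ℝ]
      lp (fun _ : ℤ => EuclideanSpace ℝ (Fin p)) 2)
    (γ : ℝ) (hγ : 0 < γ)
    (hF : ∀ d : lp (fun _ : ℤ => EuclideanSpace ℝ (Fin p)) 2,
      ‖F d‖ ^ 2 = ‖G₀ d‖ ^ 2 + γ ^ 2 * ‖d‖ ^ 2) :
    (∀ d : lp (fun _ : ℤ => EuclideanSpace ℝ (Fin p)) 2, d ≠ 0 →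
        ‖G d‖ ^ 2 - ‖G₀ d‖ ^ 2 < γ ^ 2 * ‖d‖ ^ 2) ↔
      (∀ e : lp (fun _ : ℤ => EuclideanSpace ℝ (Fin p)) 2, e ≠ 0 →
        ‖G (F.symm e)‖ < ‖e‖) := by
  constructor
  · intro h e he
    set d := F.symm e with hd
    have hdne : d ≠ 0 := fun h0 => he (by
      have := F.apply_symm_apply e
      rw [← hd, h0] at this; simpa using this.symm)
    have h1 : ‖G d‖ ^ 2 < ‖F d‖ ^ 2 := by
      have := h d hdne
      rw [hF d]; nlinarith
    have h2 : ‖G d‖ < ‖F d‖ := by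
      nlinarith [norm_nonneg (G d), norm_nonneg (F d)]
    simpa [hd, F.apply_symm_apply] using h2
  · intro h d hdne
    have hFd : F d ≠ 0 := fun h0 => hdne (by simpa using congrArg F.symm h0)
    have := h (F d) hFd
    rw [F.symm_apply_apply] at this
    have h2 : ‖G d‖ ^ 2 < ‖F d‖ ^ 2 := by
      have h0 : (0:ℝ) ≤ ‖G d‖ := norm_nonneg _
      nlinarith
    rw [hF d] at h2
    linarith
end
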